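/- arXiv:2101.10406 — 8 statements merged into one kernel-verified Lean document; each statement's English description precedes it below -/
import Mathlib

section
/- Let f : ℝ → ℝ be continuous, and let I₀, I₁, …, I_{n-1} be compact intervals such that I_j f-covers I_{j+1} for j = 0, …, n-2 and I_{n-1} f-covers I₀. Then there exists x ∈ I₀ with f^n(x) = x and f^j(x) ∈ I_j for j = 0, …, n-1. -/
/-!
Pull the loop back one interval at a time: if a continuous image of an interval contains
`[p, q]`, then some compact subinterval is mapped exactly onto `[p, q]`. Going once around
the loop gives `K = [p, q] ⊆ I₀` with `fʲ(K) ⊆ I_j` for every `j` and `fⁿ(K) = I₀ ⊇ K`,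
so `fⁿ` has a fixed point in `K` by the intermediate value theorem.
-/

/-- `I` `g`-covers `J`: there is a compact subinterval `K = [a,b] ⊆ I` with `g(K) = J`. -/
def Covers (g : ℝ → ℝ) (I J : Set ℝ) : Prop :=
  ∃ a b : ℝ, a ≤ b ∧ Set.Icc a b ⊆ I ∧ g '' Set.Icc a b = J

open Set Function

lemma eq_of_mem_uIcc_of_abs_sub_le {a b c : ℝ} (hc : c ∈ uIcc a b) (h : |b - a| ≤ |c - a|) :
    c = b := by
  rcases mem_uIcc.1 hc with ⟨h₁, h₂⟩ | ⟨h₁, h₂⟩ <;>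
    cases abs_cases (b - a) <;> cases abs_cases (c - a) <;> linarith

lemma image_uIcc_eq_Icc_of_forall_eq {g : ℝ → ℝ} {s t : ℝ} (hg : ContinuousOn g (uIcc s t))
    (hst : g s ≤ g t) (hs : ∀ y ∈ uIcc s t, g y = g s → y = s)
    (ht : ∀ y ∈ uIcc s t, g y = g t → y = t) :
    g '' uIcc s t = Icc (g s) (g t) := by
  refine Subset.antisymm ?_ (uIcc_of_le hst ▸ intermediate_value_uIcc hg)
  rintro _ ⟨x, hx, rfl⟩
  by_contra hout
  simp only [mem_Icc, not_and_or, not_le] at hout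
  rcases hout with hlt | hgt
  · have hxt : uIcc x t ⊆ uIcc s t := uIcc_subset_uIcc hx right_mem_uIcc
    obtain ⟨y, hy, hgy⟩ := intermediate_value_uIcc (hg.mono hxt)
      (mem_uIcc.2 (Or.inl ⟨hlt.le, hst⟩))
    rw [hs y (hxt hy) hgy] at hy
    have hxs : x = s := eq_of_mem_uIcc_of_abs_sub_le (uIcc_comm s t ▸ hx) <| by
      simpa only [abs_sub_comm] using abs_sub_right_of_mem_uIcc hy
    exact hlt.ne (congrArg g hxs)
  · have hsx : uIcc s x ⊆ uIcc s t := uIcc_subset_uIcc_left hx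
    obtain ⟨y, hy, hgy⟩ := intermediate_value_uIcc (hg.mono hsx)
      (mem_uIcc.2 (Or.inl ⟨hst, hgt.le⟩))
    rw [ht y (hsx hy) hgy] at hy
    have hxt : x = t := eq_of_mem_uIcc_of_abs_sub_le hx (abs_sub_left_of_mem_uIcc hy)
    exact hgt.ne' (congrArg g hxt)

/-- The pair `(s, t)` of a `p`-point and a `q`-point at minimal distance spans an interval mapped
exactly onto `[p, q]`. -/
theorem covers_Icc_of_Icc_subset_image {g : ℝ → ℝ} {I : Set ℝ} [I.OrdConnected]
    (hg : ContinuousOn g I) {p q : ℝ} (hpq : p ≤ q) (hI : Icc p q ⊆ g '' I) :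
    Covers g I (Icc p q) := by
  obtain ⟨u, hu, hgu⟩ := hI (left_mem_Icc.2 hpq)
  obtain ⟨v, hv, hgv⟩ := hI (right_mem_Icc.2 hpq)
  have huv : uIcc u v ⊆ I := OrdConnected.uIcc_subset ‹_› hu hv
  let P : Set (ℝ × ℝ) := uIcc u v ×ˢ uIcc u v ∩ Prod.map g g ⁻¹' {(p, q)}
  have hP : IsCompact P :=
    (isCompact_uIcc.prod isCompact_uIcc).of_isClosed_subset
      (((hg.mono huv).prodMap (hg.mono huv)).preimage_isClosed_of_isClosed
        (isClosed_Icc.prod isClosed_Icc) isClosed_singleton) inter_subset_left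
  have hP₀ : (u, v) ∈ P := ⟨⟨left_mem_uIcc, right_mem_uIcc⟩, by simp [hgu, hgv]⟩
  obtain ⟨⟨s, t⟩, ⟨⟨hs, ht⟩, hst⟩, hmin⟩ :=
    hP.exists_isMinOn ⟨_, hP₀⟩ (continuous_fst.sub continuous_snd).abs.continuousOn
  simp only [mem_preimage, Prod.map_apply, mem_singleton_iff, Prod.mk.injEq] at hst
  have hsub : uIcc s t ⊆ uIcc u v := uIcc_subset_uIcc hs ht
  refine ⟨s ⊓ t, s ⊔ t, inf_le_sup, hsub.trans huv, ?_⟩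
  rw [← hst.1, ← hst.2]
  refine image_uIcc_eq_Icc_of_forall_eq (hg.mono (hsub.trans huv)) (hst.1 ▸ hst.2 ▸ hpq) ?_ ?_
  · intro y hy hgy
    have hyt : (y, t) ∈ P := ⟨⟨hsub hy, ht⟩, by simp [hgy, hst]⟩
    exact eq_of_mem_uIcc_of_abs_sub_le (uIcc_comm s t ▸ hy) (hmin hyt)
  · intro y hy hgy
    have hsy : (s, y) ∈ P := ⟨⟨hs, hsub hy⟩, by simp [hgy, hst]⟩
    exact eq_of_mem_uIcc_of_abs_sub_le hy <| by
      rw [abs_sub_comm t, abs_sub_comm y]; exact hmin hsy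

theorem exists_Icc_mapsTo_iterate_of_covers {f : ℝ → ℝ} (hf : Continuous f) {A B : ℕ → ℝ}
    (m : ℕ)
    (hcov : ∀ k ≤ m, Covers f (Icc (A k) (B k)) (Icc (A (k + 1)) (B (k + 1)))) :
    ∃ p q, p ≤ q ∧ (∀ k ≤ m + 1, MapsTo f^[k] (Icc p q) (Icc (A k) (B k))) ∧
      f^[m + 1] '' Icc p q = Icc (A (m + 1)) (B (m + 1)) := by
  induction m with
  | zero =>
    obtain ⟨p, q, hpq, hsub, himg⟩ := hcov 0 le_rfl
    refine ⟨p, q, hpq, fun k hk => ?_, himg⟩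
    interval_cases k
    · exact hsub
    · exact himg ▸ mapsTo_image f _
  | succ m ih =>
    obtain ⟨p, q, -, hmaps, himg⟩ := ih fun k hk => hcov k (hk.trans m.le_succ)
    obtain ⟨α, β, hαβ, hsub, himg'⟩ := hcov (m + 1) le_rfl
    obtain ⟨p', q', hpq', hsub', himg''⟩ := covers_Icc_of_Icc_subset_image
      (hf.iterate (m + 1)).continuousOn hαβ (himg ▸ hsub)
    have hend : f^[m + 1 + 1] '' Icc p' q' = Icc (A (m + 1 + 1)) (B (m + 1 + 1)) := by
      rw [iterate_succ', image_comp, himg'', himg']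
    refine ⟨p', q', hpq', fun k hk => ?_, hend⟩
    rcases hk.lt_or_eq with hk | rfl
    · exact (hmaps k (Nat.lt_succ_iff.1 hk)).mono_left hsub'
    · exact hend ▸ mapsTo_image _ _

theorem stmt_2_general (f : ℝ → ℝ) (hf : Continuous f) (n : ℕ) [NeZero n]
    (a b : Fin n → ℝ)
    (hcov : ∀ j : Fin n, Covers f (Set.Icc (a j) (b j)) (Set.Icc (a (j + 1)) (b (j + 1)))) :
    ∃ x ∈ Set.Icc (a 0) (b 0), f^[n] x = x ∧
      ∀ j : Fin n, f^[(j : ℕ)] x ∈ Set.Icc (a j) (b j) := by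
  open Fin.NatCast in
  obtain ⟨p, q, hpq, hmaps, himg⟩ := exists_Icc_mapsTo_iterate_of_covers hf
    (A := fun k => a k) (B := fun k => b k) (n - 1) fun k _ => by
      simpa only [Nat.cast_succ] using hcov k
  have hn : n - 1 + 1 = n := Nat.sub_add_cancel NeZero.one_le
  rw [hn, Fin.natCast_self] at himg
  have hK : Icc p q ⊆ Icc (a 0) (b 0) := fun x hx => by
    simpa using hmaps 0 (Nat.zero_le _) hx
  obtain ⟨x, hx, hfix⟩ := exists_mem_Icc_isFixedPt_of_surjOn (hf.iterate n).continuousOn hpq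
    (himg ▸ hK : Icc p q ⊆ f^[n] '' Icc p q)
  refine ⟨x, hK hx, hfix, fun j => ?_⟩
  simpa using hmaps j (by omega) hx

/-- A cyclic loop of covering relations between compact intervals
`I j = [a j, b j]`, `j = 0,…,n-1` (with `n ≥ 1`), yields a point `x ∈ I 0`
with `fⁿ(x) = x` whose orbit follows the loop. -/
theorem stmt_2 (f : ℝ → ℝ) (hf : Continuous f) (n : ℕ) [NeZero n]
    (a b : Fin n → ℝ) (hab : ∀ j, a j ≤ b j)
    (hcov : ∀ j : Fin n, Covers f (Set.Icc (a j) (b j)) (Set.Icc (a (j + 1)) (b (j + 1)))) :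
    ∃ x ∈ Set.Icc (a 0) (b 0), f^[n] x = x ∧
      ∀ j : Fin n, f^[(j : ℕ)] x ∈ Set.Icc (a j) (b j) :=
  stmt_2_general f hf n a b hcov
end

section
/- Let f : ℝ → ℝ be continuous, and let I₀, I₁ be compact intervals with disjoint interiors such that each of I₀, I₁ f-covers both I₀ and I₁ (a one-dimensional topological horseshoe). Then for every n ≥ 1 and every sequence (i₀,…,i_{n-1}) ∈ {0,1}^n there exists x with f^n(x) = x and f^j(x) ∈ I_{i_j} for all j = 0,…,n-1. -/
open Set OrderDual

section PullBack

variable {α δ : Type*} [ConditionallyCompleteLinearOrder α] [TopologicalSpace α] [OrderTopology α]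
  [DenselyOrdered α] [LinearOrder δ] [TopologicalSpace δ] [OrderClosedTopology δ]

/- Take `v` the first point of `[p, q]` where `f` takes the value `f q`, and `u` the last point
of `[p, v]` where it takes the value `f p`: on `[u, v]`, `f` cannot leave `[f p, f q]` without
taking one of these values again. -/
theorem exists_Icc_subset_image_eq_Icc_of_le {f : α → δ} {p q : α} (hpq : p ≤ q)
    (hf : ContinuousOn f (Icc p q)) (hfpq : f p ≤ f q) :
    ∃ u v, u ≤ v ∧ Icc u v ⊆ Icc p q ∧ f '' Icc u v = Icc (f p) (f q) := by
  have hT : IsCompact (Icc p q ∩ f ⁻¹' {f q}) := isCompact_Icc.of_isClosed_subset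
    (hf.preimage_isClosed_of_isClosed isClosed_Icc isClosed_singleton) inter_subset_left
  obtain ⟨v, ⟨⟨hpv, hvq⟩, hfv⟩, hv_first⟩ := hT.exists_isLeast ⟨q, right_mem_Icc.2 hpq, rfl⟩
  have hf_pv : ContinuousOn f (Icc p v) := hf.mono (Icc_subset_Icc_right hvq)
  have hS : IsCompact (Icc p v ∩ f ⁻¹' {f p}) := isCompact_Icc.of_isClosed_subset
    (hf_pv.preimage_isClosed_of_isClosed isClosed_Icc isClosed_singleton) inter_subset_left
  obtain ⟨u, ⟨⟨hpu, huv⟩, hfu⟩, hu_last⟩ := hS.exists_isGreatest ⟨p, left_mem_Icc.2 hpv, rfl⟩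
  simp only [mem_preimage, mem_singleton_iff] at hfu hfv
  have hf_uv : ContinuousOn f (Icc u v) := hf_pv.mono (Icc_subset_Icc_left hpu)
  refine ⟨u, v, huv, Icc_subset_Icc hpu hvq, subset_antisymm ?_ ?_⟩
  · rintro _ ⟨x, ⟨hux, hxv⟩, rfl⟩
    constructor
    · refine not_lt.1 fun hlt => hlt.ne ?_
      obtain ⟨y, ⟨hxy, hyv⟩, hfy⟩ :=
        intermediate_value_Icc hxv (hf_uv.mono (Icc_subset_Icc_left hux)) ⟨hlt.le, hfv ▸ hfpq⟩
      have hyu : y ≤ u := hu_last ⟨⟨hpu.trans (hux.trans hxy), hyv⟩, hfy⟩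
      rwa [le_antisymm hxy (hyu.trans hux)]
    · refine not_lt.1 fun hlt => hlt.ne' ?_
      obtain ⟨y, ⟨huy, hyx⟩, hfy⟩ :=
        intermediate_value_Icc hux (hf_uv.mono (Icc_subset_Icc_right hxv)) ⟨hfu ▸ hfpq, hlt.le⟩
      have hvy : v ≤ y := hv_first ⟨⟨hpu.trans huy, hyx.trans (hxv.trans hvq)⟩, hfy⟩
      rwa [le_antisymm (hxv.trans hvy) hyx]
  · simpa only [hfu, hfv] using intermediate_value_Icc huv hf_uv

theorem exists_Icc_subset_image_eq_Icc {f : α → δ} {a b : α} {c d : δ}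
    (hf : ContinuousOn f (Icc a b)) (hsurj : SurjOn f (Icc a b) (Icc c d)) (hcd : c ≤ d) :
    ∃ u v, u ≤ v ∧ Icc u v ⊆ Icc a b ∧ f '' Icc u v = Icc c d := by
  obtain ⟨p, hp, rfl⟩ := hsurj (left_mem_Icc.2 hcd)
  obtain ⟨q, hq, rfl⟩ := hsurj (right_mem_Icc.2 hcd)
  rcases le_total p q with hpq | hqp
  · have hsub : Icc p q ⊆ Icc a b := Icc_subset_Icc hp.1 hq.2
    obtain ⟨u, v, huv, huv_sub, himg⟩ := exists_Icc_subset_image_eq_Icc_of_le hpq (hf.mono hsub) hcd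
    exact ⟨u, v, huv, huv_sub.trans hsub, himg⟩
  · -- for `q ≤ p`, run the same argument on the order dual of the domain
    have hsub : Icc q p ⊆ Icc a b := Icc_subset_Icc hq.1 hp.2
    have hf' : ContinuousOn (f ∘ ofDual) (Icc (toDual p) (toDual q)) := by
      rw [Icc_toDual]
      exact (hf.mono hsub).comp continuous_ofDual.continuousOn fun _ hx => hx
    obtain ⟨u, v, huv, huv_sub, himg⟩ := exists_Icc_subset_image_eq_Icc_of_le (f := f ∘ ofDual)
      (p := toDual p) (q := toDual q) hqp hf' hcd
    refine ⟨ofDual v, ofDual u, huv, ?_, ?_⟩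
    · rw [Icc_toDual] at huv_sub
      rw [Icc_ofDual]
      exact fun x hx => hsub (huv_sub hx)
    · rw [image_comp, ofDual.image_eq_preimage_symm] at himg
      rw [Icc_ofDual]
      exact himg

end PullBack

theorem Covers.of_Icc_subset {f : ℝ → ℝ} {I J : Set ℝ} {c d : ℝ} (hf : ContinuousOn f I)
    (hcov : Covers f I J) (hsub : Icc c d ⊆ J) (hcd : c ≤ d) : Covers f I (Icc c d) := by
  obtain ⟨a, b, -, hI, himg⟩ := hcov
  obtain ⟨u, v, huv, hsub', himg'⟩ :=
    exists_Icc_subset_image_eq_Icc (hf.mono hI) (hsub.trans himg.symm.subset) hcd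
  exact ⟨u, v, huv, hsub'.trans hI, himg'⟩

theorem exists_Icc_itinerary {f : ℝ → ℝ} (hf : Continuous f) {A B : ℕ → ℝ}
    (hAB : ∀ k, A k ≤ B k) (hcov : ∀ k, Covers f (Icc (A k) (B k)) (Icc (A (k + 1)) (B (k + 1))))
    (m : ℕ) :
    ∃ u v, u ≤ v ∧ (∀ j ≤ m, MapsTo f^[j] (Icc u v) (Icc (A j) (B j))) ∧
      f^[m] '' Icc u v = Icc (A m) (B m) := by
  induction m generalizing A B with
  | zero =>
    refine ⟨A 0, B 0, hAB 0, fun j hj => ?_, image_id _⟩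
    obtain rfl := Nat.le_zero.1 hj
    exact mapsTo_id _
  | succ m ih =>
    obtain ⟨u, v, huv, hmaps, himg⟩ := ih (fun k => hAB (k + 1)) (fun k => hcov (k + 1))
    obtain ⟨u', v', huv', hsub, himg'⟩ :=
      (hcov 0).of_Icc_subset hf.continuousOn (fun x hx => hmaps 0 m.zero_le hx) huv
    refine ⟨u', v', huv', fun j hj => ?_, by rw [Function.iterate_succ, image_comp, himg', himg]⟩
    cases j with
    | zero => exact hsub
    | succ i =>
      rw [Function.iterate_succ]
      exact (hmaps i (by omega)).comp (himg' ▸ mapsTo_image f _)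

theorem stmt_3_general (f : ℝ → ℝ) (hf : Continuous f)
    (a b : Fin 2 → ℝ) (hab : ∀ i, a i ≤ b i)
    (hcov : ∀ i j : Fin 2, Covers f (Set.Icc (a i) (b i)) (Set.Icc (a j) (b j))) :
    ∀ n : ℕ, 1 ≤ n → ∀ seq : Fin n → Fin 2,
      ∃ x : ℝ, f^[n] x = x ∧
        ∀ j : Fin n, f^[(j : ℕ)] x ∈ Set.Icc (a (seq j)) (b (seq j)) := by
  intro n hn seq
  let s : ℕ → Fin 2 := fun k => seq ⟨k % n, Nat.mod_lt k hn⟩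
  obtain ⟨u, v, huv, hmaps, himg⟩ :=
    exists_Icc_itinerary hf (fun k => hab (s k)) (fun k => hcov (s k) (s (k + 1))) n
  have hsurj : SurjOn f^[n] (Icc u v) (Icc u v) := by
    have hsn : s n = s 0 := by simp [s]
    rw [SurjOn, himg, hsn]
    exact fun x hx => hmaps 0 n.zero_le hx
  obtain ⟨x, hx, hfix⟩ := exists_mem_Icc_isFixedPt_of_surjOn (hf.iterate n).continuousOn huv hsurj
  refine ⟨x, hfix, fun j => ?_⟩
  have hsj : s j = seq j := by simp [s, Nat.mod_eq_of_lt j.isLt]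
  exact hsj ▸ hmaps j j.isLt.le hx

/-- One-dimensional topological horseshoe: two compact intervals with disjoint
interiors, each f-covering both, yield orbits following every finite itinerary. -/
theorem stmt_3 (f : ℝ → ℝ) (hf : Continuous f)
    (a b : Fin 2 → ℝ) (hab : ∀ i, a i ≤ b i)
    (hdisj : Disjoint (interior (Set.Icc (a 0) (b 0))) (interior (Set.Icc (a 1) (b 1))))
    (hcov : ∀ i j : Fin 2, Covers f (Set.Icc (a i) (b i)) (Set.Icc (a j) (b j))) :
    ∀ n : ℕ, 1 ≤ n → ∀ seq : Fin n → Fin 2,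
      ∃ x : ℝ, f^[n] x = x ∧
        ∀ j : Fin n, f^[(j : ℕ)] x ∈ Set.Icc (a (seq j)) (b (seq j)) :=
  stmt_3_general f hf a b hab hcov
end

section
/- Let f : ℝ² → ℝ² be continuous and let N₀, N₁, …, N_{n-1} be two-dimensional h-sets in 𝒞(r) (rectangles [a_i,b_i] × [−r,r]) forming a loop of horizontal covering relations: N_j f-covers N_{j+1 mod n} horizontally for all j. Then there exists x ∈ int N₀ with f^n(x) = x and f^j(x) ∈ int N_j for j = 0, …, n−1. -/
/-- The h-set `[a,b] × [-r,r] ⊂ ℝ²`. -/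
def HSet (a b r : ℝ) : Set (ℝ × ℝ) := Set.Icc a b ×ˢ Set.Icc (-r) r

/-- Left edge `{a} × [-r,r]`. -/
def LeftEdge (a r : ℝ) : Set (ℝ × ℝ) := ({a} : Set ℝ) ×ˢ Set.Icc (-r) r

/-- Right edge `{b} × [-r,r]`. -/
def RightEdge (b r : ℝ) : Set (ℝ × ℝ) := ({b} : Set ℝ) ×ˢ Set.Icc (-r) r

/-- Horizontal boundary `[a,b] × {-r,r}`. -/
def HorizBdry (a b r : ℝ) : Set (ℝ × ℝ) := Set.Icc a b ×ˢ ({-r, r} : Set ℝ)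

/-- Left side `(-∞,a) × ℝ`. -/
def LeftSide (a : ℝ) : Set (ℝ × ℝ) := Set.Iio a ×ˢ (Set.univ : Set ℝ)

/-- Right side `(b,∞) × ℝ`. -/
def RightSide (b : ℝ) : Set (ℝ × ℝ) := Set.Ioi b ×ˢ (Set.univ : Set ℝ)

/-- `N₀ = [a₀,b₀] × [-r,r]` `g`-covers `N₁ = [a₁,b₁] × [-r,r]` horizontally. -/
def CoversH (g : ℝ × ℝ → ℝ × ℝ) (a₀ b₀ a₁ b₁ r : ℝ) : Prop :=
  g '' HSet a₀ b₀ r ⊆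
      (LeftSide a₁ ∪ HSet a₁ b₁ r ∪ RightSide b₁) \ HorizBdry a₁ b₁ r ∧
  ((g '' LeftEdge a₀ r ⊆ LeftSide a₁ ∧ g '' RightEdge b₀ r ⊆ RightSide b₁) ∨
   (g '' LeftEdge a₀ r ⊆ RightSide b₁ ∧ g '' RightEdge b₀ r ⊆ LeftSide a₁))

/-!
A single self-covering `G` of `N = [a,b] × [-r,r]` has a fixed point: otherwise the displacement
`G - id` is a nonvanishing vector field on the simply connected set `N`, so it has a continuous
angle; but the covering conditions make it wind once around `∂N`.

For a loop of coverings, push each point of an orbit into the next h-set before applying `f`.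
The resulting map covers `N₀` horizontally, so it has a fixed point, and that fixed point is a
genuine periodic orbit through the interiors: a point that leaves the open strip of an h-set is
sent to a side of the next one by every later covering, so it can never return to `N₀`.
-/

open Set Real

theorem exists_continuous_angle {X : Type*} [TopologicalSpace X] [SimplyConnectedSpace X]
    [LocallyPathConnectedSpace X] {Φ : X → ℂ} (hΦ : Continuous Φ) (h0 : ∀ x, Φ x ≠ 0) :
    ∃ θ : X → ℝ, Continuous θ ∧
      ∀ x, (Φ x).re = ‖Φ x‖ * cos (θ x) ∧ (Φ x).im = ‖Φ x‖ * sin (θ x) := by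
  obtain ⟨x₀⟩ : Nonempty X := inferInstance
  obtain ⟨L, ⟨-, hL⟩, -⟩ := Complex.isCoveringMapOn_exp.existsUnique_continuousMap_lifts
    ⟨Φ, hΦ⟩ (Complex.exp_log (h0 x₀)) h0
  refine ⟨fun x => (L x).im, Complex.continuous_im.comp L.continuous, fun x => ?_⟩
  have hx : Complex.exp (L x) = Φ x := congrFun hL x
  rw [← hx, Complex.norm_exp]
  exact ⟨Complex.exp_re _, Complex.exp_im _⟩

noncomputable def turns (c t : ℝ) : ℤ := ⌊(t - c) / (2 * π)⌋

theorem turns_eq_iff {c t : ℝ} {m : ℤ} :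
    turns c t = m ↔ c + m * (2 * π) ≤ t ∧ t < c + (m + 1) * (2 * π) := by
  rw [turns, Int.floor_eq_iff, le_div_iff₀ two_pi_pos, div_lt_iff₀ two_pi_pos]
  constructor <;> rintro ⟨h₁, h₂⟩ <;> constructor <;> linarith

theorem turns_spec (c t : ℝ) :
    c + turns c t * (2 * π) ≤ t ∧ t < c + (turns c t + 1) * (2 * π) :=
  turns_eq_iff.1 rfl

theorem IsPreconnected.turns_eq {X : Type*} [TopologicalSpace X] {S : Set X}
    (hS : IsPreconnected S) {φ : X → ℝ} (hφ : ContinuousOn φ S) {c : ℝ}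
    (havoid : ∀ x ∈ S, ∀ k : ℤ, φ x ≠ c + k * (2 * π)) {x y : X} (hx : x ∈ S) (hy : y ∈ S) :
    turns c (φ x) = turns c (φ y) := by
  suffices key : ∀ x ∈ S, ∀ y ∈ S, turns c (φ x) ≤ turns c (φ y) from
    le_antisymm (key x hx y hy) (key y hy x hx)
  intro x hx y hy
  by_contra! hlt
  have hx' := (turns_spec c (φ x)).1
  have hy' := (turns_spec c (φ y)).2
  have hk : (turns c (φ y) + 1 : ℝ) ≤ turns c (φ x) := by exact_mod_cast hlt
  obtain ⟨z, hz, hφz⟩ :=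
    hS.intermediate_value hy hx hφ ⟨by nlinarith [two_pi_pos], hx'⟩
  exact havoid z hz _ hφz

theorem turns_of_cos_pos {t : ℝ} (h : 0 < cos t) :
    turns (-(π / 2)) t = turns (π / 2) t + 1 := by
  obtain ⟨h₁, h₂⟩ := turns_spec (-(π / 2)) t
  set m := turns (-(π / 2)) t
  have hlt : t - m * (2 * π) < π / 2 := by
    by_contra! hle
    have := cos_nonpos_of_pi_div_two_le_of_le hle (by linarith)
    rw [cos_sub_int_mul_two_pi] at this
    linarith
  have : turns (π / 2) t = m - 1 :=
    turns_eq_iff.2 ⟨by push_cast; linarith, by push_cast; linarith⟩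
  omega

theorem turns_of_cos_neg {t : ℝ} (h : cos t < 0) : turns (-(π / 2)) t = turns (π / 2) t := by
  obtain ⟨h₁, h₂⟩ := turns_spec (-(π / 2)) t
  set m := turns (-(π / 2)) t
  have hlt : π / 2 < t - m * (2 * π) := by
    by_contra! hle
    have := cos_nonneg_of_mem_Icc ⟨by linarith, hle⟩
    rw [cos_sub_int_mul_two_pi] at this
    linarith
  exact (turns_eq_iff.2 ⟨by linarith, by linarith⟩).symm

theorem leftEdge_subset_hSet {a b r : ℝ} (hab : a ≤ b) : LeftEdge a r ⊆ HSet a b r :=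
  prod_mono (singleton_subset_iff.2 (left_mem_Icc.2 hab)) subset_rfl

theorem rightEdge_subset_hSet {a b r : ℝ} (hab : a ≤ b) : RightEdge b r ⊆ HSet a b r :=
  prod_mono (singleton_subset_iff.2 (right_mem_Icc.2 hab)) subset_rfl

theorem horizontal_subset_hSet {a b r y : ℝ} (hy : y ∈ Icc (-r) r) :
    Icc a b ×ˢ {y} ⊆ HSet a b r :=
  prod_mono subset_rfl (singleton_subset_iff.2 hy)

/-- These conditions make the direction `θ` wind once around `∂N`, which a continuous angle
cannot do: its turn count from `-π/2` is constant along the bottom and left edges, that from `π/2`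
along the right and top edges, and the two counts differ by one at `(b, -r)` but agree at
`(a, r)`. -/
theorem not_continuousOn_angle_of_boundary_signs {θ : ℝ × ℝ → ℝ} {a b r : ℝ}
    (hab : a ≤ b) (hr : 0 ≤ r)
    (hleft : ∀ p ∈ LeftEdge a r, cos (θ p) < 0)
    (hright : ∀ p ∈ RightEdge b r, 0 < cos (θ p))
    (hbot : ∀ p ∈ Icc a b ×ˢ {-r}, cos (θ p) = 0 → 0 < sin (θ p))
    (htop : ∀ p ∈ Icc a b ×ˢ {r}, cos (θ p) = 0 → sin (θ p) < 0) :
    ¬ ContinuousOn θ (HSet a b r) := by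
  intro hθ
  have hr' : -r ≤ r := by linarith
  have hvert : IsPreconnected (Icc (-r) r) := isPreconnected_Icc
  have hhor : IsPreconnected (Icc a b) := isPreconnected_Icc
  have bottom : turns (-(π / 2)) (θ (a, -r)) = turns (-(π / 2)) (θ (b, -r)) := by
    refine (hhor.prod isPreconnected_singleton).turns_eq
      (hθ.mono (horizontal_subset_hSet ⟨le_rfl, hr'⟩)) (fun p hp k hk => ?_)
      ⟨left_mem_Icc.2 hab, rfl⟩ ⟨right_mem_Icc.2 hab, rfl⟩
    have := hbot p hp (by rw [hk, cos_add_int_mul_two_pi, cos_neg, cos_pi_div_two])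
    rw [hk, sin_add_int_mul_two_pi, sin_neg, sin_pi_div_two] at this
    linarith
  have right : turns (π / 2) (θ (b, -r)) = turns (π / 2) (θ (b, r)) := by
    refine (isPreconnected_singleton.prod hvert).turns_eq
      (hθ.mono (rightEdge_subset_hSet hab)) (fun p hp k hk => ?_)
      ⟨rfl, left_mem_Icc.2 hr'⟩ ⟨rfl, right_mem_Icc.2 hr'⟩
    have := hright p hp
    simp [hk, cos_add_int_mul_two_pi] at this
  have top : turns (π / 2) (θ (b, r)) = turns (π / 2) (θ (a, r)) := by
    refine (hhor.prod isPreconnected_singleton).turns_eq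
      (hθ.mono (horizontal_subset_hSet ⟨hr', le_rfl⟩)) (fun p hp k hk => ?_)
      ⟨right_mem_Icc.2 hab, rfl⟩ ⟨left_mem_Icc.2 hab, rfl⟩
    have := htop p hp (by rw [hk, cos_add_int_mul_two_pi, cos_pi_div_two])
    rw [hk, sin_add_int_mul_two_pi, sin_pi_div_two] at this
    linarith
  have left : turns (-(π / 2)) (θ (a, r)) = turns (-(π / 2)) (θ (a, -r)) := by
    refine (isPreconnected_singleton.prod hvert).turns_eq
      (hθ.mono (leftEdge_subset_hSet hab)) (fun p hp k hk => ?_)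
      ⟨rfl, right_mem_Icc.2 hr'⟩ ⟨rfl, left_mem_Icc.2 hr'⟩
    have := hleft p hp
    simp [hk, cos_add_int_mul_two_pi] at this
  have corner_b := turns_of_cos_pos (hright (b, -r) ⟨rfl, left_mem_Icc.2 hr'⟩)
  have corner_a := turns_of_cos_neg (hleft (a, r) ⟨rfl, right_mem_Icc.2 hr'⟩)
  omega

def clampHSet (a b r : ℝ) (p : ℝ × ℝ) : ℝ × ℝ := (max a (min p.1 b), max (-r) (min p.2 r))

theorem continuous_clampHSet (a b r : ℝ) : Continuous (clampHSet a b r) := by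
  unfold clampHSet
  fun_prop

theorem clampHSet_mem {a b r : ℝ} (hab : a ≤ b) (hr : 0 ≤ r) (p : ℝ × ℝ) :
    clampHSet a b r p ∈ HSet a b r :=
  ⟨⟨le_max_left _ _, max_le hab (min_le_right _ _)⟩,
    ⟨le_max_left _ _, max_le (by linarith) (min_le_right _ _)⟩⟩

theorem clampHSet_eq_self {a b r : ℝ} {p : ℝ × ℝ} (hp : p ∈ HSet a b r) :
    clampHSet a b r p = p := by
  obtain ⟨⟨h₁, h₂⟩, h₃, h₄⟩ := hp
  simp [clampHSet, h₁, h₂, h₃, h₄]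

theorem clampHSet_mem_leftEdge {a b r : ℝ} (hr : 0 ≤ r) {p : ℝ × ℝ} (hp : p.1 ≤ a) :
    clampHSet a b r p ∈ LeftEdge a r :=
  ⟨max_eq_left ((min_le_left _ _).trans hp), le_max_left _ _,
    max_le (by linarith) (min_le_right _ _)⟩

theorem clampHSet_mem_rightEdge {a b r : ℝ} (hab : a ≤ b) (hr : 0 ≤ r) {p : ℝ × ℝ}
    (hp : b ≤ p.1) : clampHSet a b r p ∈ RightEdge b r :=
  ⟨by simp [clampHSet, min_eq_right hp, hab], le_max_left _ _,
    max_le (by linarith) (min_le_right _ _)⟩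

theorem clampHSet_mem_edges {a b r : ℝ} (hab : a ≤ b) (hr : 0 ≤ r) {p : ℝ × ℝ}
    (hp : p.1 ∉ Ioo a b) : clampHSet a b r p ∈ LeftEdge a r ∪ RightEdge b r := by
  rcases le_or_gt p.1 a with h | h
  · exact Or.inl (clampHSet_mem_leftEdge hr h)
  · exact Or.inr (clampHSet_mem_rightEdge hab hr (not_lt.1 fun hb => hp ⟨h, hb⟩))

theorem interior_hSet (a b r : ℝ) : interior (HSet a b r) = Ioo a b ×ˢ Ioo (-r) r := by
  rw [HSet, interior_prod_eq, interior_Icc, interior_Icc]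

theorem exists_zero_of_boundary_signs {V : ℝ × ℝ → ℝ × ℝ} {a b r : ℝ}
    (hV : ContinuousOn V (HSet a b r)) (hab : a ≤ b) (hr : 0 ≤ r)
    (hleft : ∀ p ∈ LeftEdge a r, (V p).1 < 0)
    (hright : ∀ p ∈ RightEdge b r, 0 < (V p).1)
    (hbot : ∀ p ∈ Icc a b ×ˢ {-r}, (V p).1 = 0 → 0 < (V p).2)
    (htop : ∀ p ∈ Icc a b ×ˢ {r}, (V p).1 = 0 → (V p).2 < 0) :
    ∃ p ∈ HSet a b r, V p = 0 := by
  by_contra! hV0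
  -- composing with the retraction onto `N` extends the field to the simply connected plane
  set Φ : ℝ × ℝ → ℂ := fun p => Complex.equivRealProdCLM.symm (V (clampHSet a b r p))
  have hΦ0 : ∀ p, Φ p ≠ 0 := fun p => by simpa [Φ] using hV0 _ (clampHSet_mem hab hr p)
  have hΦ : Continuous Φ := Complex.equivRealProdCLM.symm.continuous.comp
    (hV.comp_continuous (continuous_clampHSet a b r) (clampHSet_mem hab hr))
  obtain ⟨θ, hθ, hpolar⟩ := exists_continuous_angle hΦ hΦ0
  have hρ : ∀ p, 0 < ‖Φ p‖ := fun p => norm_pos_iff.2 (hΦ0 p)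
  have hV_polar : ∀ p ∈ HSet a b r,
      (V p).1 = ‖Φ p‖ * cos (θ p) ∧ (V p).2 = ‖Φ p‖ * sin (θ p) := fun p hp => by
    simpa [Φ, clampHSet_eq_self hp] using hpolar p
  refine not_continuousOn_angle_of_boundary_signs hab hr (fun p hp => ?_) (fun p hp => ?_)
    (fun p hp hcos => ?_) (fun p hp hcos => ?_) hθ.continuousOn
  · have := hleft p hp
    rw [(hV_polar p (leftEdge_subset_hSet hab hp)).1] at this
    exact neg_of_mul_neg_right this (hρ p).le
  · have := hright p hp
    rw [(hV_polar p (rightEdge_subset_hSet hab hp)).1] at this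
    exact (mul_pos_iff_of_pos_left (hρ p)).1 this
  · obtain ⟨h₁, h₂⟩ := hV_polar p (horizontal_subset_hSet ⟨le_rfl, by linarith⟩ hp)
    have := hbot p hp (by rw [h₁, hcos, mul_zero])
    rw [h₂] at this
    exact (mul_pos_iff_of_pos_left (hρ p)).1 this
  · obtain ⟨h₁, h₂⟩ := hV_polar p (horizontal_subset_hSet ⟨by linarith, le_rfl⟩ hp)
    have := htop p hp (by rw [h₁, hcos, mul_zero])
    rw [h₂] at this
    exact neg_of_mul_neg_right this (hρ p).le

namespace CoversH

variable {g : ℝ × ℝ → ℝ × ℝ} {a₀ b₀ a₁ b₁ r : ℝ}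

theorem snd_mem_Ioo (hcov : CoversH g a₀ b₀ a₁ b₁ r) {p : ℝ × ℝ} (hp : p ∈ HSet a₀ b₀ r)
    (h : (g p).1 ∈ Icc a₁ b₁) : (g p).2 ∈ Ioo (-r) r := by
  obtain ⟨(hL | hN) | hR, hH⟩ := hcov.1 ⟨p, hp, rfl⟩
  · exact absurd hL.1 (not_lt.2 h.1)
  · have : (g p).2 ≠ -r ∧ (g p).2 ≠ r := by simpa [HorizBdry, h] using hH
    exact ⟨lt_of_le_of_ne hN.2.1 (Ne.symm this.1), lt_of_le_of_ne hN.2.2 this.2⟩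
  · exact absurd hR.1 (not_lt.2 h.2)

theorem fst_notMem_Icc_of_mem_edges (hcov : CoversH g a₀ b₀ a₁ b₁ r) {p : ℝ × ℝ}
    (hp : p ∈ LeftEdge a₀ r ∪ RightEdge b₀ r) : (g p).1 ∉ Icc a₁ b₁ := by
  have hside : g p ∈ LeftSide a₁ ∪ RightSide b₁ := by
    rcases hcov.2 with ⟨hL, hR⟩ | ⟨hL, hR⟩ <;> rcases hp with hp | hp
    exacts [Or.inl (hL ⟨p, hp, rfl⟩), Or.inr (hR ⟨p, hp, rfl⟩),
      Or.inr (hL ⟨p, hp, rfl⟩), Or.inl (hR ⟨p, hp, rfl⟩)]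
  rintro ⟨h₁, h₂⟩
  rcases hside with h | h
  exacts [absurd h.1 (not_lt.2 h₁), absurd h.1 (not_lt.2 h₂)]

theorem congr {g' : ℝ × ℝ → ℝ × ℝ} (hcov : CoversH g a₀ b₀ a₁ b₁ r) (hab : a₀ ≤ b₀)
    (h : EqOn g g' (HSet a₀ b₀ r)) : CoversH g' a₀ b₀ a₁ b₁ r := by
  have hL := (h.mono (leftEdge_subset_hSet hab)).image_eq
  have hR := (h.mono (rightEdge_subset_hSet (r := r) hab)).image_eq
  unfold CoversH
  rw [← h.image_eq, ← hL, ← hR]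
  exact hcov

theorem comp_clampHSet {h : ℝ × ℝ → ℝ × ℝ} {a₂ b₂ : ℝ} (hg : CoversH g a₀ b₀ a₁ b₁ r)
    (hab : a₁ ≤ b₁) (hr : 0 ≤ r) (hh : CoversH h a₁ b₁ a₂ b₂ r) :
    CoversH (h ∘ clampHSet a₁ b₁ r ∘ g) a₀ b₀ a₂ b₂ r := by
  set k := h ∘ clampHSet a₁ b₁ r
  have hL : k '' LeftSide a₁ ⊆ h '' LeftEdge a₁ r := by
    rintro _ ⟨p, hp, rfl⟩
    exact ⟨_, clampHSet_mem_leftEdge hr hp.1.le, rfl⟩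
  have hR : k '' RightSide b₁ ⊆ h '' RightEdge b₁ r := by
    rintro _ ⟨p, hp, rfl⟩
    exact ⟨_, clampHSet_mem_rightEdge hab hr hp.1.le, rfl⟩
  have trans {S T U} (h₁ : g '' S ⊆ T) (h₂ : k '' T ⊆ U) : (k ∘ g) '' S ⊆ U := by
    rw [image_comp]
    exact (image_mono h₁).trans h₂
  refine ⟨?_, ?_⟩
  · rintro _ ⟨p, hp, rfl⟩
    exact hh.1 ⟨_, clampHSet_mem hab hr _, rfl⟩
  rcases hg.2 with ⟨hgL, hgR⟩ | ⟨hgL, hgR⟩ <;> rcases hh.2 with ⟨hhL, hhR⟩ | ⟨hhL, hhR⟩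
  · exact Or.inl ⟨trans hgL (hL.trans hhL), trans hgR (hR.trans hhR)⟩
  · exact Or.inr ⟨trans hgL (hL.trans hhL), trans hgR (hR.trans hhR)⟩
  · exact Or.inr ⟨trans hgL (hR.trans hhR), trans hgR (hL.trans hhL)⟩
  · exact Or.inl ⟨trans hgL (hR.trans hhR), trans hgR (hL.trans hhL)⟩

end CoversH

theorem CoversH.exists_fixedPoint {G : ℝ × ℝ → ℝ × ℝ} {a b r : ℝ}
    (hG : ContinuousOn G (HSet a b r)) (hab : a ≤ b) (hr : 0 ≤ r) (hcov : CoversH G a b a b r) :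
    ∃ x ∈ HSet a b r, G x = x := by
  have hbot : ∀ p ∈ Icc a b ×ˢ {-r}, (G p).1 = p.1 → p.2 < (G p).2 := by
    rintro p ⟨hp, hp₂⟩ h
    rw [show p.2 = -r from hp₂]
    exact (hcov.snd_mem_Ioo (horizontal_subset_hSet ⟨le_rfl, by linarith⟩ ⟨hp, hp₂⟩)
      (h ▸ hp)).1
  have htop : ∀ p ∈ Icc a b ×ˢ {r}, (G p).1 = p.1 → (G p).2 < p.2 := by
    rintro p ⟨hp, hp₂⟩ h
    rw [show p.2 = r from hp₂]
    exact (hcov.snd_mem_Ioo (horizontal_subset_hSet ⟨by linarith, le_rfl⟩ ⟨hp, hp₂⟩)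
      (h ▸ hp)).2
  -- `s = -1` mirrors the field when the covering reverses orientation
  obtain ⟨s, hs, hleft, hright⟩ : ∃ s : ℝ, s ≠ 0 ∧
      (∀ p ∈ LeftEdge a r, s * ((G p).1 - p.1) < 0) ∧
      (∀ p ∈ RightEdge b r, 0 < s * ((G p).1 - p.1)) := by
    have ha : ∀ p ∈ LeftEdge a r, p.1 = a := fun p hp => hp.1
    have hb : ∀ p ∈ RightEdge b r, p.1 = b := fun p hp => hp.1
    rcases hcov.2 with ⟨hL, hR⟩ | ⟨hL, hR⟩
    · refine ⟨1, one_ne_zero, fun p hp => ?_, fun p hp => ?_⟩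
      · linarith [show (G p).1 < a from (hL ⟨p, hp, rfl⟩).1, ha p hp]
      · linarith [show b < (G p).1 from (hR ⟨p, hp, rfl⟩).1, hb p hp]
    · refine ⟨-1, by norm_num, fun p hp => ?_, fun p hp => ?_⟩
      · linarith [show b < (G p).1 from (hL ⟨p, hp, rfl⟩).1, ha p hp]
      · linarith [show (G p).1 < a from (hR ⟨p, hp, rfl⟩).1, hb p hp]
  have hV : ContinuousOn (fun p => (s * ((G p).1 - p.1), (G p).2 - p.2)) (HSet a b r) :=
    (continuousOn_const.mul ((continuous_fst.comp_continuousOn hG).sub continuousOn_fst)).prodMk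
      ((continuous_snd.comp_continuousOn hG).sub continuousOn_snd)
  obtain ⟨p, hp, h₀⟩ := exists_zero_of_boundary_signs hV hab hr hleft hright
    (fun p hp h => sub_pos.2 (hbot p hp (by simpa [hs, sub_eq_zero] using h)))
    (fun p hp h => sub_neg.2 (htop p hp (by simpa [hs, sub_eq_zero] using h)))
  simp only [Prod.mk_eq_zero, mul_eq_zero, hs, false_or, sub_eq_zero] at h₀
  exact ⟨p, hp, Prod.ext h₀.1 h₀.2⟩

/-- The orbit of `x` in which each point is first pushed into `N k = HSet (a k) (b k) r` before
`f` is applied: unlike the true orbit it depends continuously on `x`, and it agrees with the true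
orbit as long as the latter stays in the `N k`. -/
def clampedOrbit (f : ℝ × ℝ → ℝ × ℝ) (a b : ℕ → ℝ) (r : ℝ) (x : ℝ × ℝ) : ℕ → ℝ × ℝ
  | 0 => x
  | k + 1 => f (clampHSet (a k) (b k) r (clampedOrbit f a b r x k))

section clampedOrbit

variable {f : ℝ × ℝ → ℝ × ℝ} {a b : ℕ → ℝ} {r : ℝ}

theorem continuous_clampedOrbit (hf : Continuous f) (k : ℕ) :
    Continuous fun x => clampedOrbit f a b r x k := by
  induction k with
  | zero => exact continuous_id
  | succ k ih => exact hf.comp ((continuous_clampHSet _ _ _).comp ih)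

theorem clampedOrbit_eq_iterate {x : ℝ × ℝ} {j : ℕ}
    (h : ∀ i < j, clampedOrbit f a b r x i ∈ HSet (a i) (b i) r) :
    clampedOrbit f a b r x j = f^[j] x := by
  induction j with
  | zero => rfl
  | succ j ih =>
    rw [clampedOrbit, clampHSet_eq_self (h j j.lt_succ_self),
      ih fun i hi => h i (hi.trans j.lt_succ_self), Function.iterate_succ_apply']

variable (hab : ∀ k, a k ≤ b k) (hr : 0 ≤ r)
  (hcov : ∀ k, CoversH f (a k) (b k) (a (k + 1)) (b (k + 1)) r)
include hab hr hcov

theorem coversH_clampedOrbit (k : ℕ) :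
    CoversH (fun x => clampedOrbit f a b r x (k + 1)) (a 0) (b 0) (a (k + 1)) (b (k + 1)) r := by
  induction k with
  | zero => exact (hcov 0).congr (hab 0) fun x hx => by simp [clampedOrbit, clampHSet_eq_self hx]
  | succ k ih => exact ih.comp_clampHSet (hab _) hr (hcov _)

theorem clampedOrbit_succ_snd_mem_Ioo {x : ℝ × ℝ} {j : ℕ}
    (h : (clampedOrbit f a b r x (j + 1)).1 ∈ Icc (a (j + 1)) (b (j + 1))) :
    (clampedOrbit f a b r x (j + 1)).2 ∈ Ioo (-r) r :=
  (hcov j).snd_mem_Ioo (clampHSet_mem (hab j) hr _) h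

theorem clampedOrbit_fst_notMem_Icc {x : ℝ × ℝ} {j : ℕ}
    (h : (clampedOrbit f a b r x j).1 ∉ Ioo (a j) (b j)) {i : ℕ} (hji : j < i) :
    (clampedOrbit f a b r x i).1 ∉ Icc (a i) (b i) := by
  have step : ∀ {k}, (clampedOrbit f a b r x k).1 ∉ Ioo (a k) (b k) →
      (clampedOrbit f a b r x (k + 1)).1 ∉ Icc (a (k + 1)) (b (k + 1)) := fun hk =>
    (hcov _).fst_notMem_Icc_of_mem_edges (clampHSet_mem_edges (hab _) hr hk)
  induction i, hji using Nat.le_induction with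
  | base => exact step h
  | succ i _ ih => exact step fun hi => ih (Ioo_subset_Icc_self hi)

end clampedOrbit

theorem exists_periodic_orbit_of_coversH {f : ℝ × ℝ → ℝ × ℝ} (hf : Continuous f)
    {a b : ℕ → ℝ} {r : ℝ} (hab : ∀ k, a k ≤ b k) (hr : 0 ≤ r)
    (hcov : ∀ k, CoversH f (a k) (b k) (a (k + 1)) (b (k + 1)) r)
    {n : ℕ} (hn : 0 < n) (ha : a n = a 0) (hb : b n = b 0) :
    ∃ x, f^[n] x = x ∧ ∀ j < n, f^[j] x ∈ interior (HSet (a j) (b j) r) := by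
  obtain ⟨m, rfl⟩ : ∃ m, n = m + 1 := ⟨n - 1, by omega⟩
  have hloop := coversH_clampedOrbit hab hr hcov m
  rw [ha, hb] at hloop
  obtain ⟨x, hx, hfix : clampedOrbit f a b r x (m + 1) = x⟩ :=
    hloop.exists_fixedPoint (continuous_clampedOrbit hf _).continuousOn (hab 0) hr
  have hx_end : (clampedOrbit f a b r x (m + 1)).1 ∈ Icc (a (m + 1)) (b (m + 1)) := by
    rw [hfix, ha, hb]
    exact hx.1
  have hinside : ∀ j < m + 1, clampedOrbit f a b r x j ∈ Ioo (a j) (b j) ×ˢ Ioo (-r) r := by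
    intro j hj
    have hfst : (clampedOrbit f a b r x j).1 ∈ Ioo (a j) (b j) := by
      by_contra h
      exact clampedOrbit_fst_notMem_Icc hab hr hcov h hj hx_end
    refine ⟨hfst, ?_⟩
    cases j with
    | zero =>
      have := clampedOrbit_succ_snd_mem_Ioo hab hr hcov hx_end
      rwa [hfix] at this
    | succ i => exact clampedOrbit_succ_snd_mem_Ioo hab hr hcov (Ioo_subset_Icc_self hfst)
  have hiter : ∀ j ≤ m + 1, clampedOrbit f a b r x j = f^[j] x := fun j hj =>
    clampedOrbit_eq_iterate fun i hi =>
      prod_mono Ioo_subset_Icc_self Ioo_subset_Icc_self (hinside i (by omega))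
  refine ⟨x, (hiter _ le_rfl).symm.trans hfix, fun j hj => ?_⟩
  rw [interior_hSet, ← hiter j hj.le]
  exact hinside j hj

/-- A loop of `n` horizontal covering relations between h-sets
`N j = [a j, b j] × [-r,r]` yields `x ∈ int N₀` with `fⁿ(x) = x` whose orbit
follows the loop through the interiors. -/
theorem stmt_7 (f : ℝ × ℝ → ℝ × ℝ) (hf : Continuous f)
    (n : ℕ) [NeZero n] (a b : Fin n → ℝ) (r : ℝ) (hr : 0 < r)
    (hab : ∀ j, a j ≤ b j)
    (hcov : ∀ j : Fin n, CoversH f (a j) (b j) (a (j + 1)) (b (j + 1)) r) :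
    ∃ x ∈ interior (HSet (a 0) (b 0) r), f^[n] x = x ∧
      ∀ j : Fin n, f^[(j : ℕ)] x ∈ interior (HSet (a j) (b j) r) := by
  open Fin.NatCast in
  obtain ⟨x, hfix, horbit⟩ := exists_periodic_orbit_of_coversH hf
    (a := fun k : ℕ => a k) (b := fun k : ℕ => b k) (fun k => hab k) hr.le
    (fun k => by simpa only [Nat.cast_succ] using hcov k) (NeZero.pos n) (by simp) (by simp)
  open Fin.NatCast in
  exact ⟨x, by simpa using horbit 0 (NeZero.pos n), hfix,
    fun j => by simpa using horbit j j.isLt⟩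
end

section
/- Let f : ℝ² → ℝ² be continuous admitting a topological horseshoe on disjoint h-sets N₀, N₁ (i.e., all four horizontal covering relations N_i ⟹ N_j, i,j ∈ {0,1}, hold). Then for every n ≥ 1, f has a periodic point of least period exactly n. -/
open Set Complex

section Clamp
variable {α : Type*} [LinearOrder α]

def clamp (a b x : α) : α := max a (min b x)

lemma clamp_mem {a b : α} (h : a ≤ b) (x : α) : clamp a b x ∈ Icc a b :=
  ⟨le_max_left _ _, max_le h (min_le_left _ _)⟩

lemma clamp_of_mem {a b x : α} (h : x ∈ Icc a b) : clamp a b x = x := by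
  rw [clamp, min_eq_right h.2, max_eq_right h.1]

lemma clamp_of_le {a b x : α} (hab : a ≤ b) (h : x ≤ a) : clamp a b x = a := by
  rw [clamp, min_eq_right (h.trans hab), max_eq_left h]

lemma clamp_of_ge {a b x : α} (hab : a ≤ b) (h : b ≤ x) : clamp a b x = b := by
  rw [clamp, min_eq_left h, max_eq_right hab]

lemma clamp_eq_of_mem_Ioo {a b x : α} (h : clamp a b x ∈ Ioo a b) : clamp a b x = x := by
  unfold clamp at h ⊢
  rcases le_total x b with hxb | hbx
  · rw [min_eq_right hxb] at h ⊢
    exact max_eq_right (not_lt.mp fun hxa => (max_eq_left hxa.le ▸ h.1).false)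
  · exact absurd h.2 (not_lt.mpr (le_max_of_le_right (min_eq_left hbx).ge))

@[fun_prop]
lemma continuous_clamp [TopologicalSpace α] [OrderClosedTopology α] (a b : α) :
    Continuous (clamp a b) :=
  continuous_const.max (continuous_const.min continuous_id)

end Clamp

lemma exists_continuous_exp_eq {A : Type*} [TopologicalSpace A] [SimplyConnectedSpace A]
    [LocallyPathConnectedSpace A] {G : A → ℂ} (hG : Continuous G) (hG0 : ∀ a, G a ≠ 0) :
    ∃ L : A → ℂ, Continuous L ∧ ∀ a, exp (L a) = G a := by
  obtain ⟨a₀⟩ := (inferInstance : Nonempty A)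
  obtain ⟨L, ⟨-, hL⟩, -⟩ := isCoveringMapOn_exp.existsUnique_continuousMap_lifts ⟨G, hG⟩
    (exp_log (hG0 a₀)) hG0
  exact ⟨L, L.continuous, congrFun hL⟩

lemma sub_eq_sub_of_exp_eq_exp {X : Type*} [TopologicalSpace X] [PreconnectedSpace X]
    {g₁ g₂ : X → ℂ} (h₁ : Continuous g₁) (h₂ : Continuous g₂) (h : ∀ x, exp (g₁ x) = exp (g₂ x))
    (x y : X) : g₁ x - g₂ x = g₁ y - g₂ y := by
  have hd : IsDiscrete ((AddSubgroup.zmultiples (2 * Real.pi * I) : AddSubgroup ℂ) : Set ℂ) :=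
    isDiscrete_iff_discreteTopology.mpr (NormedSpace.discreteTopology_zmultiples _)
  refine isPreconnected_univ.constant_of_mapsTo hd (h₁.sub h₂).continuousOn (fun z _ => ?_)
    (mem_univ x) (mem_univ y)
  obtain ⟨n, hn⟩ := exp_eq_exp_iff_exists_int.mp (h z)
  exact ⟨n, by simp [hn]⟩

/-- `t ↦ Φ (·, t)` is a free homotopy of loops in `ℂ \ {0}` from `Φ (·, 0)` to the unit circle,
so `Φ (·, 0)` winds once around `0` and has no closed logarithm. -/
lemma lift_one_ne_lift_zero_of_homotopy_to_circle {Φ : ℝ × ℝ → ℂ} (hΦ : Continuous Φ)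
    (hΦ0 : ∀ p, Φ p ≠ 0) (hper : ∀ t, Φ (1, t) = Φ (0, t))
    (hcirc : ∀ s, Φ (s, 1) = exp ((2 * Real.pi * s : ℝ) * I))
    {ℓ : ℝ → ℂ} (hℓ : Continuous ℓ) (hℓΦ : ∀ s, exp (ℓ s) = Φ (s, 0)) : ℓ 1 ≠ ℓ 0 := by
  obtain ⟨g, hg, hgΦ⟩ := exists_continuous_exp_eq hΦ hΦ0
  have hbottom := sub_eq_sub_of_exp_eq_exp (g₁ := fun s => g (s, 0)) (by fun_prop) hℓ
    (fun s => by rw [hgΦ, hℓΦ]) 1 0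
  have htop := sub_eq_sub_of_exp_eq_exp (g₁ := fun s => g (s, 1))
    (g₂ := fun s : ℝ => (2 * Real.pi * s : ℝ) * I) (by fun_prop) (by fun_prop)
    (fun s => by rw [hgΦ, hcirc]) 1 0
  have hsides := sub_eq_sub_of_exp_eq_exp (g₁ := fun t => g (1, t)) (g₂ := fun t => g (0, t))
    (by fun_prop) (by fun_prop) (fun t => by rw [hgΦ, hgΦ, hper]) 0 1
  intro h
  simp only [mul_one, mul_zero, ofReal_zero, zero_mul, sub_zero, ofReal_mul, ofReal_ofNat]
    at hbottom htop hsides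
  have : (2 * Real.pi * I : ℂ) = 0 := by linear_combination hbottom + h - htop - hsides
  simp [Real.pi_ne_zero] at this

lemma ofReal_one_sub_mul_add_mul_ne_zero {w e : ℂ} {t : ℝ} (ht : t ∈ Icc (0 : ℝ) 1) (hw : w ≠ 0)
    (h : (e.re ≠ 0 ∧ 0 ≤ w.re * e.re) ∨ (e.im ≠ 0 ∧ 0 ≤ w.im * e.im)) :
    ((1 - t : ℝ) : ℂ) * w + (t : ℂ) * e ≠ 0 := by
  intro h0
  have hre : (1 - t) * w.re + t * e.re = 0 := by simpa using congrArg re h0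
  have him : (1 - t) * w.im + t * e.im = 0 := by simpa using congrArg im h0
  rcases ht.1.eq_or_lt with rfl | htpos
  · exact hw (by simpa using h0)
  rcases h with ⟨hne, hsign⟩ | ⟨hne, hsign⟩
  · have key : (1 - t) * (w.re * e.re) + t * e.re ^ 2 = 0 := by linear_combination e.re * hre
    have : 0 < t * e.re ^ 2 := by positivity
    nlinarith [mul_nonneg (sub_nonneg.mpr ht.2) hsign]
  · have key : (1 - t) * (w.im * e.im) + t * e.im ^ 2 = 0 := by linear_combination e.im * him
    have : 0 < t * e.im ^ 2 := by positivity
    nlinarith [mul_nonneg (sub_nonneg.mpr ht.2) hsign]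

lemma ne_zero_and_mul_clamp_nonneg {A B ρ x : ℝ} (hAB : A ≤ B) (h : B - A < 2 * ρ * |x|)
    {g : ℝ → ℝ} (hA : g A ≤ 0) (hB : 0 ≤ g B) :
    x ≠ 0 ∧ 0 ≤ g (clamp A B ((A + B) / 2 + ρ * x)) * x := by
  rcases lt_trichotomy x 0 with hx | rfl | hx
  · rw [abs_of_neg hx] at h
    rw [clamp_of_le hAB (by linarith)]
    exact ⟨hx.ne, mul_nonneg_of_nonpos_of_nonpos hA hx.le⟩
  · simp only [abs_zero, mul_zero] at h; linarith
  · rw [abs_of_pos hx] at h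
    rw [clamp_of_ge hAB (by linarith)]
    exact ⟨hx.ne', mul_nonneg hB hx.le⟩

lemma boundary_sign_of_clamp {A B C D ρ : ℝ} (hAB : A ≤ B) (hCD : C ≤ D)
    (hρ : B - A + (D - C) < 2 * ρ) {u v : ℝ × ℝ → ℝ}
    (huL : ∀ y ∈ Icc C D, u (A, y) ≤ 0) (huR : ∀ y ∈ Icc C D, 0 ≤ u (B, y))
    (hvB : ∀ x ∈ Icc A B, v (x, C) ≤ 0) (hvT : ∀ x ∈ Icc A B, 0 ≤ v (x, D))
    {c : ℂ} (hc : 1 ≤ ‖c‖) :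
    (c.re ≠ 0 ∧ 0 ≤ u (clamp A B ((A + B) / 2 + ρ * c.re), clamp C D ((C + D) / 2 + ρ * c.im))
      * c.re) ∨
    (c.im ≠ 0 ∧ 0 ≤ v (clamp A B ((A + B) / 2 + ρ * c.re), clamp C D ((C + D) / 2 + ρ * c.im))
      * c.im) := by
  by_cases hx : B - A < 2 * ρ * |c.re|
  · exact .inl (ne_zero_and_mul_clamp_nonneg hAB hx
      (g := fun x => u (x, clamp C D ((C + D) / 2 + ρ * c.im)))
      (huL _ (clamp_mem hCD _)) (huR _ (clamp_mem hCD _)))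
  · have hy : D - C < 2 * ρ * |c.im| := by nlinarith [norm_le_abs_re_add_abs_im c]
    exact .inr (ne_zero_and_mul_clamp_nonneg hCD hy
      (g := fun y => v (clamp A B ((A + B) / 2 + ρ * c.re), y))
      (hvB _ (clamp_mem hAB _)) (hvT _ (clamp_mem hAB _)))

theorem poincare_miranda {A B C D : ℝ} (hAB : A ≤ B) (hCD : C ≤ D) {u v : ℝ × ℝ → ℝ}
    (hu : ContinuousOn u (Icc A B ×ˢ Icc C D)) (hv : ContinuousOn v (Icc A B ×ˢ Icc C D))
    (huL : ∀ y ∈ Icc C D, u (A, y) ≤ 0) (huR : ∀ y ∈ Icc C D, 0 ≤ u (B, y))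
    (hvB : ∀ x ∈ Icc A B, v (x, C) ≤ 0) (hvT : ∀ x ∈ Icc A B, 0 ≤ v (x, D)) :
    ∃ p ∈ Icc A B ×ˢ Icc C D, u p = 0 ∧ v p = 0 := by
  by_contra! hno
  set P : ℝ × ℝ → ℝ × ℝ := fun p => (clamp A B p.1, clamp C D p.2) with hP
  have hPmem : ∀ p, P p ∈ Icc A B ×ˢ Icc C D := fun p => ⟨clamp_mem hAB _, clamp_mem hCD _⟩
  have hPc : Continuous P := by fun_prop
  set F : ℝ × ℝ → ℂ := fun p => u (P p) + v (P p) * I with hF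
  have hFc : Continuous F :=
    (continuous_ofReal.comp (hu.comp_continuous hPc hPmem)).add
      ((continuous_ofReal.comp (hv.comp_continuous hPc hPmem)).mul continuous_const)
  have hF0 : ∀ p, F p ≠ 0 := fun p h0 =>
    hno _ (hPmem p) (by simpa [hF] using congrArg re h0) (by simpa [hF] using congrArg im h0)
  set E : ℝ → ℂ := fun s => exp ((2 * Real.pi * s : ℝ) * I) with hE
  have hE10 : E 1 = E 0 := by simp [hE, exp_two_pi_mul_I]
  -- `P ∘ γ`, a large circle clamped onto the rectangle, runs along its boundary; the homotopy
  -- below deforms `F ∘ γ` linearly into the unit circle.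
  set ρ := B - A + (D - C) + 1
  set γ : ℝ → ℝ × ℝ := fun s => ((A + B) / 2 + ρ * (E s).re, (C + D) / 2 + ρ * (E s).im) with hγ
  have hsign : ∀ s, ((E s).re ≠ 0 ∧ 0 ≤ (F (γ s)).re * (E s).re) ∨
      ((E s).im ≠ 0 ∧ 0 ≤ (F (γ s)).im * (E s).im) := fun s => by
    simpa [hF, hP, hγ] using boundary_sign_of_clamp (ρ := ρ) (c := E s) hAB hCD (by linarith)
      huL huR hvB hvT (norm_exp_ofReal_mul_I (2 * Real.pi * s)).ge
  obtain ⟨L, hL, hLF⟩ := exists_continuous_exp_eq hFc hF0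
  refine lift_one_ne_lift_zero_of_homotopy_to_circle
    (Φ := fun q => ((1 - clamp 0 1 q.2 : ℝ) : ℂ) * F (γ q.1) + ((clamp 0 1 q.2 : ℝ) : ℂ) * E q.1)
    (by fun_prop)
    (fun q => ofReal_one_sub_mul_add_mul_ne_zero (clamp_mem zero_le_one _) (hF0 _) (hsign q.1))
    (fun t => by simp only [hγ, hE10]) (fun s => by simp [clamp_of_mem, hE])
    (ℓ := L ∘ γ) (by fun_prop) (fun s => by simp [hLF, clamp_of_mem])
    (by simp only [Function.comp, hγ, hE10])

noncomputable def excess (a b x : ℝ) : ℝ := x - clamp a b x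

lemma excess_eq_zero_iff {a b x : ℝ} (hab : a ≤ b) : excess a b x = 0 ↔ x ∈ Icc a b := by
  refine ⟨fun h => ?_, fun h => by rw [excess, clamp_of_mem h, sub_self]⟩
  rw [excess, sub_eq_zero] at h
  exact h ▸ clamp_mem hab x

lemma excess_of_le {a b x : ℝ} (hab : a ≤ b) (h : x ≤ a) : excess a b x = x - a := by
  rw [excess, clamp_of_le hab h]

lemma excess_of_ge {a b x : ℝ} (hab : a ≤ b) (h : b ≤ x) : excess a b x = x - b := by
  rw [excess, clamp_of_ge hab h]

lemma lt_of_excess_neg {a b x : ℝ} (hab : a ≤ b) (h : excess a b x < 0) : x < a := by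
  by_contra! hx
  rcases le_total x b with hxb | hxb
  · rw [excess, clamp_of_mem ⟨hx, hxb⟩, sub_self] at h; exact h.false
  · rw [excess_of_ge hab hxb] at h; linarith

lemma lt_of_excess_pos {a b x : ℝ} (hab : a ≤ b) (h : 0 < excess a b x) : b < x := by
  by_contra! hx
  rcases le_total a x with hxa | hxa
  · rw [excess, clamp_of_mem ⟨hxa, hx⟩, sub_self] at h; exact h.false
  · rw [excess_of_le hab hxa] at h; linarith

lemma min_le_abs_excess_clamp {a b m x : ℝ} (hab : a ≤ b) (hm : 0 ≤ m)
    (h : x ≤ a - m ∨ b + m ≤ x) : min 1 m ≤ |excess a b (clamp (a - 1) (b + 1) x)| := by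
  have h1 := min_le_left 1 m
  have h2 := min_le_right 1 m
  have h0 := le_min zero_le_one hm
  rcases h with h | h
  · have hX : clamp (a - 1) (b + 1) x ≤ a - min 1 m :=
      max_le (by linarith) (min_le_of_right_le (by linarith))
    rw [excess_of_le hab (by linarith), abs_of_nonpos (by linarith)]
    linarith
  · have hX : b + min 1 m ≤ clamp (a - 1) (b + 1) x :=
      le_max_of_le_right (le_min (by linarith) (by linarith))
    rw [excess_of_ge hab (by linarith), abs_of_nonneg (by linarith)]
    linarith

lemma abs_excess_clamp_le {a b c x : ℝ} (hab : a ≤ b) (hc : 0 ≤ c) :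
    |excess a b (clamp (a - c) (b + c) x)| ≤ min c |excess a b x| := by
  rcases le_total x a with hxa | hax
  · have hX : clamp (a - c) (b + c) x = max (a - c) x := by rw [clamp, min_eq_right (by linarith)]
    have := le_max_left (a - c) x
    rw [hX, excess_of_le hab hxa, excess_of_le hab (max_le (by linarith) hxa),
      abs_of_nonpos (by linarith [max_le (show a - c ≤ a by linarith) hxa]),
      abs_of_nonpos (by linarith),
      le_min_iff]
    exact ⟨by linarith, by linarith [le_max_right (a - c) x]⟩
  rcases le_total x b with hxb | hbx
  · rw [clamp_of_mem ⟨by linarith, by linarith⟩, excess_eq_zero_iff hab |>.mpr ⟨hax, hxb⟩, abs_zero]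
    exact le_min hc le_rfl
  · have hX : clamp (a - c) (b + c) x = min (b + c) x := by
      rw [clamp, max_eq_right (le_min (by linarith) (by linarith))]
    rw [hX, excess_of_ge hab hbx, excess_of_ge hab (le_min (by linarith) hbx),
      abs_of_nonneg (by linarith [le_min (show b ≤ b + c by linarith) hbx]),
      abs_of_nonneg (by linarith), le_min_iff]
    exact ⟨by linarith [min_le_left (b + c) x], by linarith [min_le_right (b + c) x]⟩

def EdgesCross (f : ℝ × ℝ → ℝ × ℝ) (r a b a' b' : ℝ) : Bool → Prop
  | true => ∀ y ∈ Icc (-r) r, (f (a, y)).1 ≤ a' ∧ b' ≤ (f (b, y)).1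
  | false => ∀ y ∈ Icc (-r) r, b' ≤ (f (a, y)).1 ∧ (f (b, y)).1 ≤ a'

namespace CoversH

variable {f : ℝ × ℝ → ℝ × ℝ} {a b a' b' r : ℝ}

lemma exists_edgesCross (h : CoversH f a b a' b' r) : ∃ o, EdgesCross f r a b a' b' o := by
  rcases h.2 with ⟨hL, hR⟩ | ⟨hL, hR⟩
  · exact ⟨true, fun y hy =>
      ⟨(hL ⟨(a, y), ⟨rfl, hy⟩, rfl⟩).1.le, (hR ⟨(b, y), ⟨rfl, hy⟩, rfl⟩).1.le⟩⟩
  · exact ⟨false, fun y hy =>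
      ⟨(hL ⟨(a, y), ⟨rfl, hy⟩, rfl⟩).1.le, (hR ⟨(b, y), ⟨rfl, hy⟩, rfl⟩).1.le⟩⟩

lemma apply_mem_hSet (h : CoversH f a b a' b' r) {w : ℝ × ℝ} (hw : w ∈ HSet a b r)
    (hfw : (f w).1 ∈ Icc a' b') : f w ∈ HSet a' b' r := by
  obtain ⟨(hL | hN) | hR, -⟩ := h.1 ⟨w, hw, rfl⟩
  · exact absurd hL.1 (not_lt.mpr hfw.1)
  · exact hN
  · exact absurd hR.1 (not_lt.mpr hfw.2)

end CoversH

/-- Outside `[a, b] × [-r, r]`, `f` is continued through the nearest point of the h-set, with the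
horizontal excess doubled and sent in the direction prescribed by the orientation `o`; the result
is clamped into the box `[a' - 1, b' + 1] × [-r, r]`. -/
noncomputable def stepExt (f : ℝ × ℝ → ℝ × ℝ) (r a b a' b' : ℝ) (o : Bool) (w : ℝ × ℝ) : ℝ × ℝ :=
  (clamp (a' - 1) (b' + 1)
      ((f (clamp a b w.1, clamp (-r) r w.2)).1 + (if o then 2 else -2) * excess a b w.1),
    clamp (-r) r (f (clamp a b w.1, clamp (-r) r w.2)).2)

section stepExt

variable {f : ℝ × ℝ → ℝ × ℝ} {r a b a' b' : ℝ} {o : Bool}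

lemma continuous_stepExt (hf : Continuous f) : Continuous (stepExt f r a b a' b' o) := by
  unfold stepExt excess
  fun_prop

lemma stepExt_snd_mem (hr : 0 ≤ r) (w : ℝ × ℝ) : (stepExt f r a b a' b' o w).2 ∈ Icc (-r) r :=
  clamp_mem (by linarith) _

lemma stepExt_fst_of_eq_left (hab : a ≤ b) (ha'b' : a' ≤ b') (hr : 0 ≤ r)
    (ho : EdgesCross f r a b a' b' o) {w : ℝ × ℝ} (hw : w.1 = a - 1) :
    (stepExt f r a b a' b' o w).1 = if o then a' - 1 else b' + 1 := by
  simp only [stepExt, hw, clamp_of_le hab (by linarith : a - 1 ≤ a),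
    excess_of_le hab (by linarith : a - 1 ≤ a)]
  cases o <;> have hy := ho _ (clamp_mem (by linarith : -r ≤ r) w.2)
  · exact clamp_of_ge (by linarith) (by simp only [Bool.false_eq_true, ↓reduceIte]; linarith [hy.1])
  · exact clamp_of_le (by linarith) (by simp only [↓reduceIte]; linarith [hy.1])

lemma stepExt_fst_of_eq_right (hab : a ≤ b) (ha'b' : a' ≤ b') (hr : 0 ≤ r)
    (ho : EdgesCross f r a b a' b' o) {w : ℝ × ℝ} (hw : w.1 = b + 1) :
    (stepExt f r a b a' b' o w).1 = if o then b' + 1 else a' - 1 := by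
  simp only [stepExt, hw, clamp_of_ge hab (by linarith : b ≤ b + 1),
    excess_of_ge hab (by linarith : b ≤ b + 1)]
  cases o <;> have hy := ho _ (clamp_mem (by linarith : -r ≤ r) w.2)
  · exact clamp_of_le (by linarith) (by simp only [Bool.false_eq_true, ↓reduceIte]; linarith [hy.2])
  · exact clamp_of_ge (by linarith) (by simp only [↓reduceIte]; linarith [hy.2])

lemma min_le_abs_excess_stepExt (hab : a ≤ b) (ha'b' : a' ≤ b') (hr : 0 ≤ r)
    (ho : EdgesCross f r a b a' b' o) {w : ℝ × ℝ} (he : excess a b w.1 ≠ 0) :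
    min 1 (2 * |excess a b w.1|) ≤ |excess a' b' (stepExt f r a b a' b' o w).1| := by
  apply min_le_abs_excess_clamp ha'b' (by positivity)
  rcases he.lt_or_gt with hneg | hpos
  · rw [clamp_of_le hab (lt_of_excess_neg hab hneg).le, abs_of_neg hneg]
    cases o <;> have hy := ho _ (clamp_mem (by linarith : -r ≤ r) w.2)
    · right; simp only [Bool.false_eq_true, ↓reduceIte]; linarith [hy.1]
    · left; simp only [↓reduceIte]; linarith [hy.1]
  · rw [clamp_of_ge hab (lt_of_excess_pos hab hpos).le, abs_of_pos hpos]
    cases o <;> have hy := ho _ (clamp_mem (by linarith : -r ≤ r) w.2)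
    · left; simp only [Bool.false_eq_true, ↓reduceIte]; linarith [hy.2]
    · right; simp only [↓reduceIte]; linarith [hy.2]

lemma stepExt_eq_apply (hab : a ≤ b) (ha'b' : a' ≤ b') (hcov : CoversH f a b a' b' r)
    {w : ℝ × ℝ} (hw : w.2 ∈ Icc (-r) r) (he : excess a b w.1 = 0)
    (he' : excess a' b' (stepExt f r a b a' b' o w).1 = 0) :
    w ∈ HSet a b r ∧ stepExt f r a b a' b' o w = f w := by
  have hwN : w ∈ HSet a b r := ⟨(excess_eq_zero_iff hab).mp he, hw⟩
  have hproj : (clamp a b w.1, clamp (-r) r w.2) = w := by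
    rw [clamp_of_mem hwN.1, clamp_of_mem hw]
  rw [excess_eq_zero_iff ha'b', stepExt, hproj, he, mul_zero, add_zero] at he'
  have hfw1 : (f w).1 ∈ Icc a' b' := by
    rwa [← clamp_eq_of_mem_Ioo (Icc_subset_Ioo (by linarith) (by linarith) he')]
  have hfw := hcov.apply_mem_hSet hwN hfw1
  refine ⟨hwN, ?_⟩
  rw [stepExt, hproj, he, mul_zero, add_zero, clamp_of_mem hfw.2,
    clamp_of_mem (Icc_subset_Icc (by linarith) (by linarith) hfw.1)]

end stepExt

lemma le_abs_of_expanding {E : ℕ → ℝ} (hE : ∀ k, E k ≠ 0 → min 1 (2 * |E k|) ≤ |E (k + 1)|)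
    {k : ℕ} (hk : E k ≠ 0) {m : ℕ} (hkm : k < m) : min 1 (2 * |E k|) ≤ |E m| := by
  induction m, hkm using Nat.le_induction with
  | base => exact hE k hk
  | succ m _ ih =>
    have hpos : 0 < min 1 (2 * |E k|) := lt_min one_pos (by positivity)
    refine (le_min (min_le_left _ _) ?_).trans (hE m (abs_pos.mp (hpos.trans_le ih)))
    linarith [abs_nonneg (E m)]

noncomputable def extChain (f : ℝ × ℝ → ℝ × ℝ) (r : ℝ) (α β : ℕ → ℝ) (o : ℕ → Bool) :
    ℕ → ℝ × ℝ → ℝ × ℝ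
  | 0 => id
  | k + 1 => stepExt f r (α k) (β k) (α (k + 1)) (β (k + 1)) (o k) ∘ extChain f r α β o k

section extChain

variable {f : ℝ × ℝ → ℝ × ℝ} {r : ℝ} {α β : ℕ → ℝ} {o : ℕ → Bool}

lemma extChain_succ_apply (k : ℕ) (z : ℝ × ℝ) : extChain f r α β o (k + 1) z =
    stepExt f r (α k) (β k) (α (k + 1)) (β (k + 1)) (o k) (extChain f r α β o k z) := rfl

lemma continuous_extChain (hf : Continuous f) (k : ℕ) : Continuous (extChain f r α β o k) := by
  induction k with
  | zero => exact continuous_id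
  | succ k ih => exact (continuous_stepExt hf).comp ih

lemma extChain_snd_mem (hr : 0 ≤ r) {z : ℝ × ℝ} (hz : z.2 ∈ Icc (-r) r) (k : ℕ) :
    (extChain f r α β o k z).2 ∈ Icc (-r) r := by
  cases k with
  | zero => exact hz
  | succ k => exact stepExt_snd_mem hr _

lemma extChain_fst_edges (hαβ : ∀ k, α k ≤ β k) (hr : 0 ≤ r)
    (ho : ∀ k, EdgesCross f r (α k) (β k) (α (k + 1)) (β (k + 1)) (o k)) (k : ℕ) :
    ∃ P : Bool, ∀ y, (extChain f r α β o k (α 0 - 1, y)).1 = (if P then α k - 1 else β k + 1) ∧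
      (extChain f r α β o k (β 0 + 1, y)).1 = (if P then β k + 1 else α k - 1) := by
  induction k with
  | zero => exact ⟨true, fun y => ⟨rfl, rfl⟩⟩
  | succ k ih =>
    obtain ⟨P, hP⟩ := ih
    refine ⟨P == o k, fun y => ?_⟩
    obtain ⟨h₁, h₂⟩ := hP y
    rw [extChain_succ_apply, extChain_succ_apply]
    cases P
    · simp only [Bool.false_eq_true, if_false] at h₁ h₂
      rw [stepExt_fst_of_eq_right (hαβ k) (hαβ (k + 1)) hr (ho k) h₁,
        stepExt_fst_of_eq_left (hαβ k) (hαβ (k + 1)) hr (ho k) h₂]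
      cases o k <;> simp
    · simp only [if_true] at h₁ h₂
      rw [stepExt_fst_of_eq_left (hαβ k) (hαβ (k + 1)) hr (ho k) h₁,
        stepExt_fst_of_eq_right (hαβ k) (hαβ (k + 1)) hr (ho k) h₂]
      cases o k <;> simp

lemma excess_extChain_eq_zero (hαβ : ∀ k, α k ≤ β k) (hr : 0 ≤ r)
    (ho : ∀ k, EdgesCross f r (α k) (β k) (α (k + 1)) (β (k + 1)) (o k)) {n : ℕ} (hn : 0 < n)
    (hα : α n = α 0) (hβ : β n = β 0) {z : ℝ × ℝ}
    (hz : (extChain f r α β o n z).1 = clamp (α 0 - 2⁻¹) (β 0 + 2⁻¹) z.1) :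
    ∀ k ≤ n, excess (α k) (β k) (extChain f r α β o k z).1 = 0 := by
  set E : ℕ → ℝ := fun k => excess (α k) (β k) (extChain f r α β o k z).1 with hE
  have hexp : ∀ k, E k ≠ 0 → min 1 (2 * |E k|) ≤ |E (k + 1)| := fun k hk =>
    min_le_abs_excess_stepExt (hαβ k) (hαβ (k + 1)) hr (ho k) hk
  have hEn : |E n| ≤ min 2⁻¹ |E 0| := by
    simp only [hE, hz, hα, hβ]
    exact abs_excess_clamp_le (hαβ 0) (by norm_num)
  have hE0 : E 0 = 0 := by
    by_contra h
    have h0 := abs_pos.mpr h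
    refine absurd ((le_abs_of_expanding hexp h hn).trans hEn) (not_le.mpr (lt_min ?_ ?_))
    · exact (min_le_left _ _).trans_lt (by norm_num)
    · exact (min_le_right _ _).trans_lt (by linarith)
  have hEn0 : E n = 0 := by
    have hz0 : z.1 ∈ Icc (α 0) (β 0) := (excess_eq_zero_iff (hαβ 0)).mp hE0
    have hcl : clamp (α 0 - 2⁻¹) (β 0 + 2⁻¹) z.1 = z.1 :=
      clamp_of_mem (Icc_subset_Icc (by linarith) (by linarith) hz0)
    simp only [hE, hz, hα, hβ, hcl]
    exact hE0
  intro k hk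
  rcases hk.lt_or_eq with hk | rfl
  · by_contra h
    have := le_abs_of_expanding hexp h hk
    rw [hEn0, abs_zero] at this
    exact absurd this (not_le.mpr (lt_min one_pos (by positivity)))
  · exact hEn0

lemma iterate_eq_extChain (hαβ : ∀ k, α k ≤ β k) (hr : 0 ≤ r)
    (hcov : ∀ k, CoversH f (α k) (β k) (α (k + 1)) (β (k + 1)) r) {z : ℝ × ℝ}
    (hz : z.2 ∈ Icc (-r) r) {n : ℕ}
    (hE : ∀ k ≤ n, excess (α k) (β k) (extChain f r α β o k z).1 = 0) :
    (∀ k ≤ n, f^[k] z = extChain f r α β o k z) ∧ ∀ k < n, f^[k] z ∈ HSet (α k) (β k) r := by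
  have hstep : ∀ k < n, extChain f r α β o k z ∈ HSet (α k) (β k) r ∧
      extChain f r α β o (k + 1) z = f (extChain f r α β o k z) := fun k hk =>
    stepExt_eq_apply (hαβ k) (hαβ (k + 1)) (hcov k) (extChain_snd_mem hr hz k) (hE k hk.le)
      (hE (k + 1) hk)
  have hiter : ∀ k ≤ n, f^[k] z = extChain f r α β o k z := by
    intro k
    induction k with
    | zero => exact fun _ => rfl
    | succ k ih =>
      intro hk
      rw [Function.iterate_succ_apply', ih (by omega), (hstep k (by omega)).2]
  exact ⟨hiter, fun k hk => hiter k hk.le ▸ (hstep k hk).1⟩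

lemma exists_extChain_eq_clamp (hf : Continuous f) (hαβ : ∀ k, α k ≤ β k) (hr : 0 ≤ r)
    (ho : ∀ k, EdgesCross f r (α k) (β k) (α (k + 1)) (β (k + 1)) (o k)) {n : ℕ}
    (hα : α n = α 0) (hβ : β n = β 0) :
    ∃ z ∈ Icc (α 0 - 1) (β 0 + 1) ×ˢ Icc (-r) r,
      (extChain f r α β o n z).1 = clamp (α 0 - 2⁻¹) (β 0 + 2⁻¹) z.1 ∧
      (extChain f r α β o n z).2 = z.2 := by
  have hGc := continuous_extChain (r := r) (α := α) (β := β) (o := o) hf n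
  have hAB : α 0 - 1 ≤ β 0 + 1 := by linarith [hαβ 0]
  have hCD : -r ≤ r := by linarith
  have hvB : ∀ x ∈ Icc (α 0 - 1) (β 0 + 1), -r - (extChain f r α β o n (x, -r)).2 ≤ 0 :=
    fun x _ => sub_nonpos.mpr (extChain_snd_mem hr ⟨le_rfl, hCD⟩ n).1
  have hvT : ∀ x ∈ Icc (α 0 - 1) (β 0 + 1), 0 ≤ r - (extChain f r α β o n (x, r)).2 :=
    fun x _ => sub_nonneg.mpr (extChain_snd_mem hr ⟨hCD, le_rfl⟩ n).2
  have hleft : clamp (α 0 - 2⁻¹) (β 0 + 2⁻¹) (α 0 - 1) = α 0 - 2⁻¹ :=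
    clamp_of_le (by linarith [hαβ 0]) (by linarith)
  have hright : clamp (α 0 - 2⁻¹) (β 0 + 2⁻¹) (β 0 + 1) = β 0 + 2⁻¹ :=
    clamp_of_ge (by linarith [hαβ 0]) (by linarith)
  obtain ⟨P, hP⟩ := extChain_fst_edges hαβ hr ho n
  rw [hα, hβ] at hP
  cases P <;> simp only [Bool.false_eq_true, ↓reduceIte] at hP
  · obtain ⟨z, hz, h₁, h₂⟩ := poincare_miranda hAB hCD
      (u := fun z => clamp (α 0 - 2⁻¹) (β 0 + 2⁻¹) z.1 - (extChain f r α β o n z).1)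
      (v := fun z => z.2 - (extChain f r α β o n z).2) (by fun_prop) (by fun_prop)
      (fun y _ => by simp only [(hP y).1, hleft]; linarith [hαβ 0])
      (fun y _ => by simp only [(hP y).2, hright]; linarith [hαβ 0]) hvB hvT
    exact ⟨z, hz, (sub_eq_zero.mp h₁).symm, (sub_eq_zero.mp h₂).symm⟩
  · obtain ⟨z, hz, h₁, h₂⟩ := poincare_miranda hAB hCD
      (u := fun z => (extChain f r α β o n z).1 - clamp (α 0 - 2⁻¹) (β 0 + 2⁻¹) z.1)
      (v := fun z => z.2 - (extChain f r α β o n z).2) (by fun_prop) (by fun_prop)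
      (fun y _ => by simp only [(hP y).1, hleft]; linarith)
      (fun y _ => by simp only [(hP y).2, hright]; linarith) hvB hvT
    exact ⟨z, hz, sub_eq_zero.mp h₁, (sub_eq_zero.mp h₂).symm⟩

end extChain

theorem exists_isPeriodicPt_of_coversH {f : ℝ × ℝ → ℝ × ℝ} (hf : Continuous f) {r : ℝ}
    (hr : 0 ≤ r) {α β : ℕ → ℝ} (hαβ : ∀ k, α k ≤ β k)
    (hcov : ∀ k, CoversH f (α k) (β k) (α (k + 1)) (β (k + 1)) r) {n : ℕ} (hα : α n = α 0)
    (hβ : β n = β 0) :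
    ∃ z, Function.IsPeriodicPt f n z ∧ ∀ k < n, f^[k] z ∈ HSet (α k) (β k) r := by
  rcases n.eq_zero_or_pos with rfl | hn
  · exact ⟨0, Function.isPeriodicPt_zero f 0, fun k hk => absurd hk k.not_lt_zero⟩
  choose o ho using fun k => (hcov k).exists_edgesCross
  obtain ⟨z, hz, hz₁, hz₂⟩ := exists_extChain_eq_clamp hf hαβ hr ho hα hβ
  have hE := excess_extChain_eq_zero hαβ hr ho hn hα hβ hz₁
  obtain ⟨hiter, hmem⟩ := iterate_eq_extChain hαβ hr hcov hz.2 hE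
  have hz0 : z.1 ∈ Icc (α 0) (β 0) := (excess_eq_zero_iff (hαβ 0)).mp (hE 0 hn.le)
  have hcl : clamp (α 0 - 2⁻¹) (β 0 + 2⁻¹) z.1 = z.1 :=
    clamp_of_mem (Icc_subset_Icc (by linarith) (by linarith) hz0)
  exact ⟨z, (hiter n le_rfl).trans (Prod.ext (hz₁.trans hcl) hz₂), hmem⟩

/-- A topological horseshoe on two disjoint h-sets yields periodic points of
every least period `n ≥ 1`. -/
theorem stmt_9 (f : ℝ × ℝ → ℝ × ℝ) (hf : Continuous f)
    (a b : Fin 2 → ℝ) (r : ℝ) (hr : 0 < r) (hab : ∀ i, a i ≤ b i)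
    (hdisj : Disjoint (HSet (a 0) (b 0) r) (HSet (a 1) (b 1) r))
    (hcov : ∀ i j : Fin 2, CoversH f (a i) (b i) (a j) (b j) r) :
    ∀ n : ℕ, 1 ≤ n → ∃ x : ℝ × ℝ, Function.minimalPeriod f x = n := by
  intro n hn
  set s : ℕ → Fin 2 := fun k => if k % n = 0 then 0 else 1 with hs
  obtain ⟨z, hper, hmem⟩ := exists_isPeriodicPt_of_coversH hf hr.le (α := a ∘ s) (β := b ∘ s)
    (n := n) (fun k => hab _) (fun k => hcov _ _) (by simp [hs]) (by simp [hs])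
  refine ⟨z, le_antisymm (hper.minimalPeriod_le hn) (not_lt.mp fun hlt => ?_)⟩
  have hpos := hper.minimalPeriod_pos hn
  have h₀ : z ∈ HSet (a 0) (b 0) r := by simpa [hs] using hmem 0 hn
  have h₁ : z ∈ HSet (a 1) (b 1) r := by
    simpa [hs, Nat.mod_eq_of_lt hlt, hpos.ne', Function.iterate_minimalPeriod] using hmem _ hlt
  exact disjoint_left.mp hdisj h₀ h₁
end

section
/- Let f : ℝ → ℝ be continuous with a periodic orbit of least period 3. Then for every n ∈ ℕ, n ≥ 1, f has a periodic point of least period n. -/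
/-!
Order the orbit as `p < q < r`. Up to reversing the order, `f p = q`, `f q = r`, `f r = p`, and
by the intermediate value theorem `I = [p, q]` and `J = [q, r]` satisfy `f(I) ⊇ J` and
`f(J) ⊇ I ∪ J`; in particular `f` has a fixed point in `J`. For `n ≥ 2`, pulling back the
itinerary `J → J → ⋯ → J → I → J` of length `n` gives an interval `K ⊆ J` with `f^n(K) = J ⊇ K`,
hence a fixed point `x` of `f^n` whose orbit lies in `J` except at time `n - 1`, where it lies
in `I`. If the least period of `x` were smaller, `f^(n-1) x` would also lie in `J`, so it would
be `q`; then `x = f q = r` and `f x = p < q`, whereas `f x` lies in `J` (or is `q`, if `n = 2`).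
-/

open Set Function OrderDual

section IntervalImages

variable {α β : Type*} [ConditionallyCompleteLinearOrder α] [TopologicalSpace α] [OrderTopology α]
  [DenselyOrdered α] [LinearOrder β] [TopologicalSpace β] [OrderClosedTopology β]

theorem exists_isFixedPt_of_Icc_subset_image {f : α → α} {a b : α} (hf : ContinuousOn f (Icc a b))
    (hab : a ≤ b) (h : Icc a b ⊆ f '' Icc a b) : ∃ x ∈ Icc a b, IsFixedPt f x := by
  obtain ⟨x₀, hx₀, hfx₀⟩ := h (left_mem_Icc.2 hab)
  obtain ⟨x₁, hx₁, hfx₁⟩ := h (right_mem_Icc.2 hab)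
  exact isPreconnected_Icc.intermediate_value₂ hx₀ hx₁ hf continuousOn_id
    (hfx₀ ▸ hx₀.1) (hfx₁ ▸ hx₁.2)

/- Take `b'` the first point of `[x, y]` where `f = d`, then `a'` the last point of `[x, b']`
where `f = c`: on `[a', b']`, leaving `[c, d]` would force another visit to `c` or `d`. -/
theorem exists_Icc_image_eq_Icc_of_le {f : α → β} {x y : α} {c d : β}
    (hf : ContinuousOn f (Icc x y)) (hxy : x ≤ y) (hcd : c ≤ d) (hfx : f x = c) (hfy : f y = d) :
    ∃ a' b', a' ≤ b' ∧ Icc a' b' ⊆ Icc x y ∧ f '' Icc a' b' = Icc c d := by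
  have closed_level (s : Set α) (hs : IsClosed s) (hsub : s ⊆ Icc x y) (e : β) :
      IsCompact (s ∩ f ⁻¹' {e}) :=
    isCompact_Icc.of_isClosed_subset
      ((hf.mono hsub).preimage_isClosed_of_isClosed hs isClosed_singleton)
      (inter_subset_left.trans hsub)
  obtain ⟨b', ⟨⟨hxb', hb'y⟩, hfb'⟩, hb'_least⟩ :=
    (closed_level _ isClosed_Icc subset_rfl d).exists_isLeast ⟨y, right_mem_Icc.2 hxy, hfy⟩
  obtain ⟨a', ⟨⟨hxa', ha'b'⟩, hfa'⟩, ha'_greatest⟩ :=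
    (closed_level _ isClosed_Icc (Icc_subset_Icc_right hb'y) c).exists_isGreatest
      ⟨x, left_mem_Icc.2 hxb', hfx⟩
  simp only [mem_preimage, mem_singleton_iff] at hfa' hfb'
  refine ⟨a', b', ha'b', Icc_subset_Icc hxa' hb'y, ?_⟩
  refine Subset.antisymm ?_ (hfa' ▸ hfb' ▸ intermediate_value_Icc ha'b' (hf.mono ?_))
  · rintro _ ⟨t, ⟨hat, htb⟩, rfl⟩
    constructor
    · by_contra! hlt
      obtain ⟨u, ⟨htu, hub⟩, hfu⟩ :=
        intermediate_value_Icc htb (hf.mono (Icc_subset_Icc (hxa'.trans hat) hb'y))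
          ⟨hlt.le, hfb' ▸ hcd⟩
      have hua : u ≤ a' := ha'_greatest ⟨⟨hxa'.trans (hat.trans htu), hub⟩, hfu⟩
      obtain rfl := le_antisymm htu (hua.trans hat)
      exact hlt.ne hfu
    · by_contra! hgt
      obtain ⟨u, ⟨hxu, hut⟩, hfu⟩ :=
        intermediate_value_Icc (hxa'.trans hat) (hf.mono (Icc_subset_Icc_right (htb.trans hb'y)))
          ⟨hfx ▸ hcd, hgt.le⟩
      have hbu : b' ≤ u := hb'_least ⟨⟨hxu, hut.trans (htb.trans hb'y)⟩, hfu⟩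
      obtain rfl := le_antisymm hut (htb.trans hbu)
      exact hgt.ne' hfu
  · exact Icc_subset_Icc hxa' hb'y

theorem exists_Icc_image_eq_Icc {f : α → β} {a b : α} {c d : β} (hf : ContinuousOn f (Icc a b))
    (hcd : c ≤ d) (h : Icc c d ⊆ f '' Icc a b) :
    ∃ a' b', a' ≤ b' ∧ Icc a' b' ⊆ Icc a b ∧ f '' Icc a' b' = Icc c d := by
  obtain ⟨x, hx, hfx⟩ := h (left_mem_Icc.2 hcd)
  obtain ⟨y, hy, hfy⟩ := h (right_mem_Icc.2 hcd)
  rcases le_total x y with hxy | hyx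
  · obtain ⟨a', b', hab', hsub, himage⟩ :=
      exists_Icc_image_eq_Icc_of_le (hf.mono (Icc_subset_Icc hx.1 hy.2)) hxy hcd hfx hfy
    exact ⟨a', b', hab', hsub.trans (Icc_subset_Icc hx.1 hy.2), himage⟩
  · have hmaps : MapsTo ofDual (Icc (toDual x) (toDual y)) (Icc a b) :=
      fun t ht ↦ Icc_subset_Icc hy.1 hx.2 ⟨ht.2, ht.1⟩
    obtain ⟨a', b', hab', hsub, himage⟩ := exists_Icc_image_eq_Icc_of_le (f := f ∘ ofDual)
      (x := toDual x) (y := toDual y) (hf.comp continuous_ofDual.continuousOn hmaps) hyx hcd hfx hfy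
    have hdual : Icc (ofDual b') (ofDual a') = ofDual '' Icc a' b' := by
      rw [Icc_ofDual, ← Equiv.image_symm_eq_preimage]; rfl
    refine ⟨ofDual b', ofDual a', hab', ?_, by rwa [hdual, ← image_comp]⟩
    rw [hdual]
    exact (hmaps.mono_left hsub).image_subset

theorem exists_Icc_mapsTo_iterate_of_Icc_subset_image {f : α → α} (a b : ℕ → α) (n : ℕ)
    (hf : ∀ i < n, ContinuousOn f (Icc (a i) (b i))) (hab : ∀ i ≤ n, a i ≤ b i)
    (hcover : ∀ i < n, Icc (a (i + 1)) (b (i + 1)) ⊆ f '' Icc (a i) (b i)) :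
    ∃ a' b', a' ≤ b' ∧ (∀ i ≤ n, MapsTo f^[i] (Icc a' b') (Icc (a i) (b i))) ∧
      f^[n] '' Icc a' b' = Icc (a n) (b n) := by
  induction n generalizing a b with
  | zero =>
    exact ⟨a 0, b 0, hab 0 le_rfl, fun i hi ↦ by simp [Nat.le_zero.1 hi, mapsTo_id], by simp⟩
  | succ n ih =>
    obtain ⟨a₁, b₁, hab₁, hmaps₁, himage₁⟩ := ih (a ∘ (· + 1)) (b ∘ (· + 1))
      (fun i hi ↦ hf (i + 1) (by omega)) (fun i hi ↦ hab (i + 1) (by omega))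
      (fun i hi ↦ hcover (i + 1) (by omega))
    obtain ⟨a', b', hab', hsub, himage⟩ := exists_Icc_image_eq_Icc (hf 0 n.succ_pos) hab₁
      (fun t ht ↦ hcover 0 n.succ_pos (hmaps₁ 0 n.zero_le ht))
    refine ⟨a', b', hab', fun i hi ↦ ?_, by rw [iterate_succ, image_comp, himage, himage₁]; rfl⟩
    cases i with
    | zero => exact hsub
    | succ i => exact (hmaps₁ i (by omega)).comp (himage ▸ mapsTo_image f _)

end IntervalImages

theorem Function.IsPeriodicPt.minimalPeriod_eq_of_iterate_pred_le {α : Type*} [PartialOrder α]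
    {f : α → α} {q x : α} {n : ℕ} (hq : f (f q) < q) (hn : 2 ≤ n) (hx : IsPeriodicPt f n x)
    (hge : ∀ i < n - 1, q ≤ f^[i] x) (hle : f^[n - 1] x ≤ q) : minimalPeriod f x = n := by
  have hpos : 0 < minimalPeriod f x := hx.minimalPeriod_pos (by omega)
  by_contra hne
  have hlt : minimalPeriod f x < n := (Nat.le_of_dvd (by omega) hx.minimalPeriod_dvd).lt_of_ne hne
  have hlast : f^[n - 1] x = q := by
    refine le_antisymm hle ?_
    rw [← iterate_mod_minimalPeriod_eq]
    exact hge _ ((Nat.mod_lt _ hpos).trans_le (by omega))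
  have hxq : x = f q := by
    rw [← hlast, ← iterate_succ_apply' f, Nat.succ_eq_add_one,
      Nat.sub_add_cancel (by omega : 1 ≤ n)]
    exact hx.eq.symm
  have hfx : q ≤ f x := by
    rcases hn.lt_or_eq with hn | rfl
    · exact hge 1 (by omega)
    · exact hlast.ge
  exact (hxq ▸ hfx).not_gt hq

section PeriodThree

variable {α : Type*} [ConditionallyCompleteLinearOrder α] [TopologicalSpace α] [OrderTopology α]
  [DenselyOrdered α] {f : α → α}

theorem exists_minimalPeriod_eq_of_cycle (hf : Continuous f) {p q r : α} (hpq : p < q)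
    (hqr : q < r) (hp : f p = q) (hq : f q = r) (hr : f r = p) {n : ℕ} (hn : 1 ≤ n) :
    ∃ x, minimalPeriod f x = n := by
  have hJ : Icc p r ⊆ f '' Icc q r := by
    simpa only [hq, hr] using intermediate_value_Icc' hqr.le hf.continuousOn
  have hIJ : Icc q r ⊆ f '' Icc p q := by
    simpa only [hp, hq] using intermediate_value_Icc hpq.le hf.continuousOn
  have hJJ : Icc q r ⊆ f '' Icc q r := (Icc_subset_Icc_left hpq.le).trans hJ
  have hJI : Icc p q ⊆ f '' Icc q r := (Icc_subset_Icc_right hqr.le).trans hJ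
  obtain rfl | hn := hn.eq_or_lt
  · obtain ⟨x, -, hx⟩ := exists_isFixedPt_of_Icc_subset_image hf.continuousOn hqr.le hJJ
    exact ⟨x, minimalPeriod_eq_one_iff_isFixedPt.2 hx⟩
  -- the itinerary `J, …, J, I, J` with `I = [p, q]`, `J = [q, r]`
  set a : ℕ → α := fun i ↦ if i = n - 1 then p else q with ha
  set b : ℕ → α := fun i ↦ if i = n - 1 then q else r with hb
  obtain ⟨a', b', hab', hmaps, himage⟩ := exists_Icc_mapsTo_iterate_of_Icc_subset_image a b n
    (fun _ _ ↦ hf.continuousOn) (fun i _ ↦ by simp only [ha, hb]; split_ifs <;> order)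
    (fun i hi ↦ by simp only [ha, hb]; split_ifs <;> first | assumption | omega)
  have hself : Icc a' b' ⊆ f^[n] '' Icc a' b' := by
    have h0 : (0 : ℕ) ≠ n - 1 := by omega
    have hn' : n ≠ n - 1 := by omega
    have hstart := hmaps 0 n.zero_le
    simp only [ha, hb, if_neg h0] at hstart
    simp only [himage, ha, hb, if_neg hn']
    exact hstart
  obtain ⟨x, hx, hfix⟩ :=
    exists_isFixedPt_of_Icc_subset_image (hf.iterate n).continuousOn hab' hself
  refine ⟨x, IsPeriodicPt.minimalPeriod_eq_of_iterate_pred_le (by rwa [hq, hr]) hn hfix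
    (fun i hi ↦ ?_) ?_⟩
  · simpa [ha, hi.ne] using (hmaps i (by omega) hx).1
  · simpa [hb] using (hmaps (n - 1) (by omega) hx).2

theorem exists_minimalPeriod_eq_of_cycle_of_lt (hf : Continuous f) {a b c : α} (hab : a < b)
    (hac : a < c) (ha : f a = b) (hb : f b = c) (hc : f c = a) {n : ℕ} (hn : 1 ≤ n) :
    ∃ x, minimalPeriod f x = n := by
  have hbc : b ≠ c := by
    rintro rfl
    exact hab.ne (hc.symm.trans hb)
  rcases hbc.lt_or_gt with hbc | hcb
  · exact exists_minimalPeriod_eq_of_cycle hf hab hbc ha hb hc hn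
  -- in the order dual, `b < c < a` and the cycle runs `b → c → a → b`
  · obtain ⟨x, hx⟩ := exists_minimalPeriod_eq_of_cycle (f := toDual ∘ f ∘ ofDual)
      (continuous_toDual.comp (hf.comp continuous_ofDual)) (toDual_lt_toDual.2 hcb)
      (toDual_lt_toDual.2 hac) (congrArg toDual hb) (congrArg toDual hc) (congrArg toDual ha) hn
    exact ⟨ofDual x, hx⟩

theorem exists_minimalPeriod_eq_of_minimalPeriod_eq_three (hf : Continuous f) {x : α}
    (hx : minimalPeriod f x = 3) {n : ℕ} (hn : 1 ≤ n) : ∃ y, minimalPeriod f y = n := by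
  have hne : ∀ y, minimalPeriod f y = 3 → f y ≠ y := fun y hy hfix ↦ by
    simp [minimalPeriod_eq_one_iff_isFixedPt.2 hfix] at hy
  have hcycle : f (f (f x)) = x := by
    have := isPeriodicPt_minimalPeriod f x
    rwa [hx] at this
  have h01 : f x ≠ x := hne x hx
  have h12 : f (f x) ≠ f x :=
    hne (f x) ((minimalPeriod_apply (minimalPeriod_pos_iff_mem_periodicPts.1 (by omega))).trans hx)
  have h02 : f (f x) ≠ x := fun h ↦ h01 (by simpa [h] using hcycle)
  -- rotate the cycle so that it starts at the least point of the orbit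
  rcases h01.lt_or_gt with h01 | h01 <;> rcases h12.lt_or_gt with h12 | h12 <;>
    rcases h02.lt_or_gt with h02 | h02
  all_goals first
    | (refine exists_minimalPeriod_eq_of_cycle_of_lt hf ?_ ?_ rfl rfl hcycle hn <;> order)
    | (refine exists_minimalPeriod_eq_of_cycle_of_lt hf ?_ ?_ rfl hcycle rfl hn <;> order)
    | (refine exists_minimalPeriod_eq_of_cycle_of_lt hf ?_ ?_ hcycle rfl rfl hn <;> order)

end PeriodThree

/-- Period 3 implies all periods: a continuous map of the real line with a
periodic orbit of least period 3 has periodic points of every least period `n ≥ 1`. -/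
theorem stmt_11 (f : ℝ → ℝ) (hf : Continuous f)
    (h3 : ∃ x : ℝ, Function.minimalPeriod f x = 3) :
    ∀ n : ℕ, 1 ≤ n → ∃ x : ℝ, Function.minimalPeriod f x = n := by
  obtain ⟨x, hx⟩ := h3
  exact fun n hn ↦ exists_minimalPeriod_eq_of_minimalPeriod_eq_three hf hx hn
end

section
/- Let f : ℝ → ℝ be continuous and let I₀, I₁, I₂, I₃ be compact intervals satisfying the covering diagram: I₀ f-covers I₂ and I₃; I₂ f-covers I₂ and I₁; I₁ f-covers I₃; I₃ f-covers I₀. Then f has a point x ∈ I₀ with f²(x) = x (from the loop I₀ → I₃ → I₀) and a point y ∈ I₁ with f⁴(y) = y and itinerary I₁ → I₃ → I₀ → I₂ → I₁. -/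
open Set Function

lemma mem_uIcc_or_mem_uIcc_of_notMem_uIcc {β : Type*} [LinearOrder β] {s t w : β}
    (hw : w ∉ uIcc s t) : t ∈ uIcc s w ∨ s ∈ uIcc w t := by
  simp only [mem_uIcc] at *
  grind

section Pullback

variable {α β : Type*} [ConditionallyCompleteLinearOrder α] [TopologicalSpace α] [OrderTopology α]
  [DenselyOrdered α] [LinearOrder β] [TopologicalSpace β] [OrderClosedTopology β] {f : α → β}

/-- `a` is the last time in `[u, v]` at which `f` takes the value `f u`, and `b` the first time
after `a` at which it takes the value `f v`; between them `f` cannot leave `[[f u, f v]]`. -/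
theorem exists_image_Icc_eq_uIcc {u v : α} (huv : u ≤ v) (hf : ContinuousOn f (Icc u v)) :
    ∃ a b, u ≤ a ∧ a ≤ b ∧ b ≤ v ∧ f '' Icc a b = uIcc (f u) (f v) := by
  set A := Icc u v ∩ f ⁻¹' {f u}
  have hA : IsClosed A := hf.preimage_isClosed_of_isClosed isClosed_Icc isClosed_singleton
  have hAbdd : BddAbove A := ⟨v, fun x hx => hx.1.2⟩
  obtain ⟨⟨hua, hav⟩, hfa : f (sSup A) = f u⟩ : sSup A ∈ A :=
    hA.csSup_mem ⟨u, ⟨le_rfl, huv⟩, rfl⟩ hAbdd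
  set a := sSup A
  set B := Icc a v ∩ f ⁻¹' {f v}
  have hB : IsClosed B := (hf.mono (Icc_subset_Icc_left hua)).preimage_isClosed_of_isClosed
    isClosed_Icc isClosed_singleton
  have hBbdd : BddBelow B := ⟨a, fun x hx => hx.1.1⟩
  obtain ⟨⟨hab, hbv⟩, hfb : f (sInf B) = f v⟩ : sInf B ∈ B :=
    hB.csInf_mem ⟨v, ⟨hav, le_rfl⟩, rfl⟩ hBbdd
  set b := sInf B
  have hcont : ∀ {x y}, x ∈ Icc a b → y ∈ Icc a b → ContinuousOn f (uIcc x y) := fun hx hy =>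
    hf.mono ((uIcc_subset_Icc hx hy).trans (Icc_subset_Icc hua hbv))
  refine ⟨a, b, hua, hab, hbv, subset_antisymm ?_ ?_⟩
  · rintro _ ⟨x, ⟨hax, hxb⟩, rfl⟩
    by_contra hout
    rcases mem_uIcc_or_mem_uIcc_of_notMem_uIcc hout with hv | hu
    · obtain ⟨z, hz, hfz⟩ := intermediate_value_uIcc (hcont ⟨le_rfl, hab⟩ ⟨hax, hxb⟩) (hfa ▸ hv)
      rw [uIcc_of_le hax] at hz
      have hbz : b ≤ z := csInf_le hBbdd ⟨⟨hz.1, hz.2.trans (hxb.trans hbv)⟩, hfz⟩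
      exact hout (le_antisymm hz.2 (hxb.trans hbz) ▸ hfz ▸ right_mem_uIcc)
    · obtain ⟨z, hz, hfz⟩ := intermediate_value_uIcc (hcont ⟨hax, hxb⟩ ⟨hab, le_rfl⟩) (hfb ▸ hu)
      rw [uIcc_of_le hxb] at hz
      have hza : z ≤ a := le_csSup hAbdd ⟨⟨hua.trans (hax.trans hz.1), hz.2.trans hbv⟩, hfz⟩
      exact hout (le_antisymm (hza.trans hax) hz.1 ▸ hfz ▸ left_mem_uIcc)
  · simpa only [uIcc_of_le hab, hfa, hfb] using
      intermediate_value_uIcc (hcont ⟨le_rfl, hab⟩ ⟨hab, le_rfl⟩)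

theorem ContinuousOn.exists_Icc_subset_image_Icc_eq {a b : α} {c d : β}
    (hf : ContinuousOn f (Icc a b)) (hcd : c ≤ d) (h : Icc c d ⊆ f '' Icc a b) :
    ∃ a' b', a' ≤ b' ∧ Icc a' b' ⊆ Icc a b ∧ f '' Icc a' b' = Icc c d := by
  obtain ⟨p, hp, rfl⟩ := h (left_mem_Icc.2 hcd)
  obtain ⟨q, hq, rfl⟩ := h (right_mem_Icc.2 hcd)
  rcases le_total p q with hpq | hqp
  · obtain ⟨a', b', hpa, hab, hbq, himage⟩ :=
      exists_image_Icc_eq_uIcc hpq (hf.mono (Icc_subset_Icc hp.1 hq.2))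
    exact ⟨a', b', hab, Icc_subset_Icc (hp.1.trans hpa) (hbq.trans hq.2),
      himage.trans (uIcc_of_le hcd)⟩
  · obtain ⟨a', b', hqa, hab, hbp, himage⟩ :=
      exists_image_Icc_eq_uIcc hqp (hf.mono (Icc_subset_Icc hq.1 hp.2))
    exact ⟨a', b', hab, Icc_subset_Icc (hq.1.trans hqa) (hbp.trans hp.2),
      himage.trans (uIcc_of_ge hcd)⟩

end Pullback

namespace Covers

variable {f g : ℝ → ℝ} {I J L : Set ℝ}

theorem comp (hf : Continuous f) (hIJ : Covers f I J) (hJL : Covers g J L) :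
    Covers (g ∘ f) (I ∩ f ⁻¹' J) L := by
  obtain ⟨a, b, -, hI, rfl⟩ := hIJ
  obtain ⟨c, d, hcd, hJ, rfl⟩ := hJL
  obtain ⟨a', b', hab', hsub, himage⟩ := hf.continuousOn.exists_Icc_subset_image_Icc_eq hcd hJ
  exact ⟨a', b', hab', fun x hx => ⟨hI (hsub hx), mem_image_of_mem f (hsub hx)⟩,
    by rw [image_comp, himage]⟩

theorem exists_isFixedPt (hg : Continuous g) (h : Covers g I J) (hIJ : I ⊆ J) :
    ∃ x ∈ I, IsFixedPt g x := by
  obtain ⟨a, b, hab, hI, rfl⟩ := h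
  obtain ⟨x, hx, hfix⟩ := exists_mem_Icc_isFixedPt_of_surjOn hg.continuousOn hab (hI.trans hIJ)
  exact ⟨x, hI hx, hfix⟩

end Covers

theorem stmt_13_general (f : ℝ → ℝ) (hf : Continuous f)
    (a₀ b₀ a₁ b₁ a₂ b₂ a₃ b₃ : ℝ)
    (hc02 : Covers f (Set.Icc a₀ b₀) (Set.Icc a₂ b₂))
    (hc03 : Covers f (Set.Icc a₀ b₀) (Set.Icc a₃ b₃))
    (hc21 : Covers f (Set.Icc a₂ b₂) (Set.Icc a₁ b₁))
    (hc13 : Covers f (Set.Icc a₁ b₁) (Set.Icc a₃ b₃))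
    (hc30 : Covers f (Set.Icc a₃ b₃) (Set.Icc a₀ b₀)) :
    (∃ x ∈ Set.Icc a₀ b₀, f^[2] x = x ∧ f x ∈ Set.Icc a₃ b₃) ∧
    (∃ y ∈ Set.Icc a₁ b₁, f^[4] y = y ∧ f y ∈ Set.Icc a₃ b₃ ∧
      f^[2] y ∈ Set.Icc a₀ b₀ ∧ f^[3] y ∈ Set.Icc a₂ b₂) := by
  refine ⟨?_, ?_⟩
  · obtain ⟨x, ⟨hx₀, hx₃⟩, hx⟩ :=
      (hc03.comp hf hc30).exists_isFixedPt (by fun_prop) inter_subset_left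
    exact ⟨x, hx₀, hx, hx₃⟩
  · have hloop := ((hc13.comp hf hc30).comp (by fun_prop) hc02).comp (by fun_prop) hc21
    obtain ⟨y, ⟨⟨⟨hy₁, hy₃⟩, hy₀⟩, hy₂⟩, hy⟩ :=
      hloop.exists_isFixedPt (by fun_prop) fun y hy => hy.1.1.1
    exact ⟨y, hy₁, hy, hy₃, hy₀, hy₂⟩

/-- From the covering diagram `I₀ → I₂, I₃`; `I₂ → I₂, I₁`; `I₁ → I₃`; `I₃ → I₀`
we get a 2-periodic point in `I₀` (loop `I₀ → I₃ → I₀`) and a 4-periodic point in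
`I₁` with itinerary `I₁ → I₃ → I₀ → I₂ → I₁`. -/
theorem stmt_13 (f : ℝ → ℝ) (hf : Continuous f)
    (a₀ b₀ a₁ b₁ a₂ b₂ a₃ b₃ : ℝ)
    (h₀ : a₀ ≤ b₀) (h₁ : a₁ ≤ b₁) (h₂ : a₂ ≤ b₂) (h₃ : a₃ ≤ b₃)
    (hc02 : Covers f (Set.Icc a₀ b₀) (Set.Icc a₂ b₂))
    (hc03 : Covers f (Set.Icc a₀ b₀) (Set.Icc a₃ b₃))
    (hc22 : Covers f (Set.Icc a₂ b₂) (Set.Icc a₂ b₂))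
    (hc21 : Covers f (Set.Icc a₂ b₂) (Set.Icc a₁ b₁))
    (hc13 : Covers f (Set.Icc a₁ b₁) (Set.Icc a₃ b₃))
    (hc30 : Covers f (Set.Icc a₃ b₃) (Set.Icc a₀ b₀)) :
    (∃ x ∈ Set.Icc a₀ b₀, f^[2] x = x ∧ f x ∈ Set.Icc a₃ b₃) ∧
    (∃ y ∈ Set.Icc a₁ b₁, f^[4] y = y ∧ f y ∈ Set.Icc a₃ b₃ ∧
      f^[2] y ∈ Set.Icc a₀ b₀ ∧ f^[3] y ∈ Set.Icc a₂ b₂) :=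
  stmt_13_general f hf a₀ b₀ a₁ b₁ a₂ b₂ a₃ b₃ hc02 hc03 hc21 hc13 hc30
end

section
/- Let N₀ = [a₀,b₀] × [−r,r] and N₁ = [a₁,b₁] × [−r,r] be h-sets and f : ℝ² → ℝ² continuous such that N₀ f-covers N₁ horizontally. Then for every continuous curve γ : [0,1] → N₀ with γ(0) ∈ L(N₀) and γ(1) ∈ R(N₀), the image f ∘ γ intersects N₁; in particular f(N₀) ∩ N₁ ≠ ∅. -/
/-!
The first coordinate of `f ∘ γ` starts on one side of `[a₁, b₁]` and ends on the other, so by the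
intermediate value theorem it takes the value `a₁`. The covering condition keeps `f(N₀)` off the
horizontal boundary and inside the sides or `N₁`, so a point of `f(N₀)` whose first coordinate lies
in `[a₁, b₁]` lies in `N₁`. The straight segment from `(a₀, 0)` to `(b₀, 0)` gives such a curve.
-/

theorem convex_hSet (a b r : ℝ) : Convex ℝ (HSet a b r) :=
  (convex_Icc a b).prod (convex_Icc (-r) r)

theorem exists_mem_Icc_apply_eq_of_mem_uIcc {φ : ℝ → ℝ} (hφ : ContinuousOn φ (Set.Icc 0 1))
    {c : ℝ} (hc : c ∈ Set.uIcc (φ 0) (φ 1)) : ∃ t ∈ Set.Icc (0 : ℝ) 1, φ t = c := by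
  rw [← Set.uIcc_of_le zero_le_one] at hφ ⊢
  exact intermediate_value_uIcc hφ hc

namespace CoversH

variable {f : ℝ × ℝ → ℝ × ℝ} {a₀ b₀ a₁ b₁ r : ℝ}

theorem apply_mem_hSet_of_fst_mem_Icc (hcov : CoversH f a₀ b₀ a₁ b₁ r) {p : ℝ × ℝ}
    (hp : p ∈ HSet a₀ b₀ r) (hfp : (f p).1 ∈ Set.Icc a₁ b₁) : f p ∈ HSet a₁ b₁ r := by
  rcases (hcov.1 ⟨p, hp, rfl⟩).1 with (hL | hN) | hR
  · exact absurd hL.1 (not_lt.2 hfp.1)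
  · exact hN
  · exact absurd hR.1 (not_lt.2 hfp.2)

theorem a₁_mem_uIcc_fst (hcov : CoversH f a₀ b₀ a₁ b₁ r) (h₁ : a₁ ≤ b₁) {p q : ℝ × ℝ}
    (hp : p ∈ LeftEdge a₀ r) (hq : q ∈ RightEdge b₀ r) : a₁ ∈ Set.uIcc (f p).1 (f q).1 := by
  rw [Set.mem_uIcc]
  rcases hcov.2 with ⟨hL, hR⟩ | ⟨hL, hR⟩
  · exact Or.inl ⟨(hL ⟨p, hp, rfl⟩).1.le, h₁.trans (hR ⟨q, hq, rfl⟩).1.le⟩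
  · exact Or.inr ⟨(hR ⟨q, hq, rfl⟩).1.le, h₁.trans (hL ⟨p, hp, rfl⟩).1.le⟩

theorem exists_apply_comp_mem_hSet (hcov : CoversH f a₀ b₀ a₁ b₁ r) (hf : Continuous f)
    (h₁ : a₁ ≤ b₁) {γ : ℝ → ℝ × ℝ} (hγ : ContinuousOn γ (Set.Icc 0 1))
    (hγN : Set.MapsTo γ (Set.Icc 0 1) (HSet a₀ b₀ r))
    (hγ0 : γ 0 ∈ LeftEdge a₀ r) (hγ1 : γ 1 ∈ RightEdge b₀ r) :
    ∃ t ∈ Set.Icc (0 : ℝ) 1, f (γ t) ∈ HSet a₁ b₁ r := by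
  have hφ : ContinuousOn (fun t => (f (γ t)).1) (Set.Icc 0 1) :=
    (continuous_fst.comp hf).comp_continuousOn hγ
  obtain ⟨t, ht, hta₁⟩ :=
    exists_mem_Icc_apply_eq_of_mem_uIcc hφ (hcov.a₁_mem_uIcc_fst h₁ hγ0 hγ1)
  refine ⟨t, ht, hcov.apply_mem_hSet_of_fst_mem_Icc (hγN ht) ?_⟩
  rw [hta₁]
  exact Set.left_mem_Icc.2 h₁

end CoversH

/-- If `N₀` f-covers `N₁` horizontally, then the `f`-image of any continuous
curve in `N₀` joining the left edge to the right edge meets `N₁`; in particular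
`f(N₀) ∩ N₁ ≠ ∅`. -/
theorem stmt_16 (f : ℝ × ℝ → ℝ × ℝ) (hf : Continuous f)
    (a₀ b₀ a₁ b₁ r : ℝ) (h₀ : a₀ ≤ b₀) (h₁ : a₁ ≤ b₁) (hr : 0 < r)
    (hcov : CoversH f a₀ b₀ a₁ b₁ r) :
    (∀ γ : ℝ → ℝ × ℝ, ContinuousOn γ (Set.Icc 0 1) →
      Set.MapsTo γ (Set.Icc 0 1) (HSet a₀ b₀ r) →
      γ 0 ∈ LeftEdge a₀ r → γ 1 ∈ RightEdge b₀ r →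
      ∃ t ∈ Set.Icc (0 : ℝ) 1, f (γ t) ∈ HSet a₁ b₁ r) ∧
    (f '' HSet a₀ b₀ r ∩ HSet a₁ b₁ r).Nonempty := by
  have hcurve := fun γ hγ hγN hγ0 hγ1 =>
    hcov.exists_apply_comp_mem_hSet (γ := γ) hf h₁ hγ hγN hγ0 hγ1
  refine ⟨hcurve, ?_⟩
  have h0r : (0 : ℝ) ∈ Set.Icc (-r) r := ⟨neg_nonpos.2 hr.le, hr.le⟩
  have hleft : ((a₀, 0) : ℝ × ℝ) ∈ LeftEdge a₀ r := ⟨rfl, h0r⟩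
  have hright : ((b₀, 0) : ℝ × ℝ) ∈ RightEdge b₀ r := ⟨rfl, h0r⟩
  let γ := AffineMap.lineMap (k := ℝ) ((a₀, 0) : ℝ × ℝ) (b₀, 0)
  have hγN : Set.MapsTo γ (Set.Icc 0 1) (HSet a₀ b₀ r) := fun _ ht =>
    (convex_hSet a₀ b₀ r).lineMap_mem ⟨⟨le_rfl, h₀⟩, h0r⟩ ⟨⟨h₀, le_rfl⟩, h0r⟩ ht
  obtain ⟨t, ht, hft⟩ := hcurve γ AffineMap.lineMap_continuous.continuousOn hγN
    (by simpa [γ] using hleft) (by simpa [γ] using hright)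
  exact ⟨f (γ t), ⟨γ t, hγN ht, rfl⟩, hft⟩
end

section
/- Let f : ℝ → ℝ be continuous and let I₀, I₁ be compact intervals with I₀ to the left of I₁ (sup I₀ ≤ inf I₁) such that I₀ f-covers I₁, I₁ f-covers I₁, and I₁ f-covers I₀. Then for every n ≥ 2 there exists x ∈ I₀ with f^n(x) = x, f(x) ∈ I₁, …, f^{n-1}(x) ∈ I₁, and if additionally int I₀ ∩ int I₁ = ∅ and x ∈ int I₀, f^j(x) ∈ int I₁ for 1 ≤ j ≤ n−1, then the least period of x equals n. -/
open Set Function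

theorem exists_Icc_image_eq_Icc_of_le_s19 {f : ℝ → ℝ} (hf : Continuous f) {u v c d : ℝ}
    (huv : u ≤ v) (hcd : c ≤ d) (hu : f u = c) (hv : f v = d) :
    ∃ a b, a ≤ b ∧ Icc a b ⊆ Icc u v ∧ f '' Icc a b = Icc c d := by
  obtain ⟨hbS, hbS_le⟩ : IsLeast (Icc u v ∩ f ⁻¹' {d}) (sInf (Icc u v ∩ f ⁻¹' {d})) :=
    (isClosed_Icc.inter (isClosed_singleton.preimage hf)).isLeast_csInf
      ⟨v, ⟨huv, le_rfl⟩, hv⟩ ⟨u, fun t ht => ht.1.1⟩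
  set b := sInf (Icc u v ∩ f ⁻¹' {d})
  obtain ⟨⟨hub, hbv⟩, hfb⟩ := hbS
  obtain ⟨haT, haT_ge⟩ : IsGreatest (Icc u b ∩ f ⁻¹' {c}) (sSup (Icc u b ∩ f ⁻¹' {c})) :=
    (isClosed_Icc.inter (isClosed_singleton.preimage hf)).isGreatest_csSup
      ⟨u, ⟨le_rfl, hub⟩, hu⟩ ⟨b, fun t ht => ht.1.2⟩
  set a := sSup (Icc u b ∩ f ⁻¹' {c})
  obtain ⟨⟨hua, hab⟩, hfa⟩ := haT
  simp only [mem_preimage, mem_singleton_iff] at hfa hfb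
  refine ⟨a, b, hab, Icc_subset_Icc hua hbv, Subset.antisymm ?_ ?_⟩
  · rintro _ ⟨t, ⟨hat, htb⟩, rfl⟩
    constructor
    · by_contra! hlt
      obtain ⟨s, ⟨hts, hsb⟩, hfs⟩ :=
        intermediate_value_Icc htb hf.continuousOn ⟨hlt.le, hfb ▸ hcd⟩
      have hsa : s ≤ a := haT_ge ⟨⟨hua.trans (hat.trans hts), hsb⟩, hfs⟩
      rw [← le_antisymm hts (hsa.trans hat)] at hfs
      exact hlt.ne hfs
    · by_contra! hlt
      obtain ⟨s, ⟨has, hst⟩, hfs⟩ :=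
        intermediate_value_Icc hat hf.continuousOn ⟨hfa ▸ hcd, hlt.le⟩
      have hbs : b ≤ s := hbS_le ⟨⟨hua.trans has, hst.trans (htb.trans hbv)⟩, hfs⟩
      rw [le_antisymm hst (htb.trans hbs)] at hfs
      exact hlt.ne' hfs
  · simpa only [hfa, hfb] using intermediate_value_Icc hab hf.continuousOn

theorem exists_Icc_image_eq_of_Icc_subset_image {f : ℝ → ℝ} (hf : Continuous f) {a b c d : ℝ}
    (hcd : c ≤ d) (h : Icc c d ⊆ f '' Icc a b) :
    ∃ a' b', a' ≤ b' ∧ Icc a' b' ⊆ Icc a b ∧ f '' Icc a' b' = Icc c d := by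
  obtain ⟨u, hu, hfu⟩ := h ⟨le_rfl, hcd⟩
  obtain ⟨v, hv, hfv⟩ := h ⟨hcd, le_rfl⟩
  have hspan : Icc (min u v) (max u v) ⊆ Icc a b :=
    Icc_subset_Icc (le_min hu.1 hv.1) (max_le hu.2 hv.2)
  rcases le_total u v with huv | hvu
  · obtain ⟨a', b', hab', hsub, himg⟩ := exists_Icc_image_eq_Icc_of_le_s19 hf huv hcd hfu hfv
    exact ⟨a', b', hab', hsub.trans (by simpa [huv] using hspan), himg⟩
  · -- the endpoints are reached in reverse order: apply the ordered case to `-f`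
    obtain ⟨a', b', hab', hsub, himg⟩ :=
      exists_Icc_image_eq_Icc_of_le_s19 hf.neg hvu (neg_le_neg hcd) (by simp [hfv]) (by simp [hfu])
    refine ⟨a', b', hab', hsub.trans (by simpa [hvu] using hspan), ?_⟩
    simpa [image_image] using congrArg (Neg.neg '' ·) himg

theorem exists_Icc_itinerary_s19 {f : ℝ → ℝ} (hf : Continuous f) (I : ℕ → Set ℝ) {n : ℕ}
    (hn : 0 < n) (hI : ∀ j < n, Covers f (I j) (I (j + 1))) :
    ∃ a b, a ≤ b ∧ (∀ j ≤ n, f^[j] '' Icc a b ⊆ I j) ∧ f^[n] '' Icc a b = I n := by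
  induction n, hn using Nat.le_induction with
  | base =>
    obtain ⟨a, b, hab, hsub, himg⟩ := hI 0 zero_lt_one
    refine ⟨a, b, hab, fun j hj => ?_, by simpa using himg⟩
    interval_cases j
    · simpa using hsub
    · simp [himg]
  | succ n hn ih =>
    obtain ⟨a, b, -, hsub, himg⟩ := ih fun j hj => hI j (by omega)
    obtain ⟨p, q, hpq, hpq_sub, hpq_img⟩ := hI n (by omega)
    obtain ⟨a', b', hab', hsub', himg'⟩ :=
      exists_Icc_image_eq_of_Icc_subset_image (hf.iterate n) hpq (himg ▸ hpq_sub)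
    have hlast : f^[n + 1] '' Icc a' b' = I (n + 1) := by
      rw [iterate_succ', image_comp, himg', hpq_img]
    refine ⟨a', b', hab', fun j hj => ?_, hlast⟩
    rcases hj.lt_or_eq with hj | rfl
    · exact (image_mono hsub').trans (hsub j (by omega))
    · exact hlast.le

theorem Function.IsPeriodicPt.minimalPeriod_eq_of_forall_iterate_notMem {α : Type*} {f : α → α}
    {x : α} {n : ℕ} {s : Set α} (hx : IsPeriodicPt f n x) (hn : 0 < n) (hxs : x ∈ s)
    (hs : ∀ j, 0 < j → j < n → f^[j] x ∉ s) : minimalPeriod f x = n := by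
  refine (hx.minimalPeriod_le hn).antisymm (not_lt.1 fun hlt => ?_)
  exact hs _ (hx.minimalPeriod_pos hn) hlt (by rwa [iterate_minimalPeriod])

theorem stmt_19_general (f : ℝ → ℝ) (hf : Continuous f)
    (a₀ b₀ a₁ b₁ : ℝ)
    (hc01 : Covers f (Set.Icc a₀ b₀) (Set.Icc a₁ b₁))
    (hc11 : Covers f (Set.Icc a₁ b₁) (Set.Icc a₁ b₁))
    (hc10 : Covers f (Set.Icc a₁ b₁) (Set.Icc a₀ b₀)) :
    ∀ n : ℕ, 2 ≤ n → ∃ x ∈ Set.Icc a₀ b₀, f^[n] x = x ∧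
      (∀ j : ℕ, 1 ≤ j → j ≤ n - 1 → f^[j] x ∈ Set.Icc a₁ b₁) ∧
      (Disjoint (interior (Set.Icc a₀ b₀)) (interior (Set.Icc a₁ b₁)) →
        x ∈ interior (Set.Icc a₀ b₀) →
        (∀ j : ℕ, 1 ≤ j → j ≤ n - 1 → f^[j] x ∈ interior (Set.Icc a₁ b₁)) →
        Function.minimalPeriod f x = n) := by
  intro n hn
  set I : ℕ → Set ℝ := fun j => if j = 0 ∨ j = n then Icc a₀ b₀ else Icc a₁ b₁ with hI
  have hcovers : ∀ j < n, Covers f (I j) (I (j + 1)) := by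
    intro j hj
    simp only [hI, Nat.add_one_ne_zero, false_or]
    split_ifs
    · omega
    · exact hc01
    · exact hc10
    · exact hc11
  obtain ⟨p, q, hpq, hsub, himg⟩ := exists_Icc_itinerary_s19 hf I (by omega) hcovers
  have hK : Icc p q ⊆ Icc a₀ b₀ := by simpa [hI] using hsub 0 (by omega)
  obtain ⟨x, hxK, hfix⟩ := exists_mem_Icc_isFixedPt_of_surjOn (hf.iterate n).continuousOn hpq
    (by simpa [SurjOn, himg, hI] using hK)
  have horbit : ∀ j, 1 ≤ j → j ≤ n - 1 → f^[j] x ∈ Icc a₁ b₁ := fun j hj₁ hjn => by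
    simpa [hI, show j ≠ 0 by omega, show j ≠ n by omega] using
      hsub j (by omega) (mem_image_of_mem _ hxK)
  refine ⟨x, hK hxK, hfix, horbit, fun hdisj hx hint => ?_⟩
  exact IsPeriodicPt.minimalPeriod_eq_of_forall_iterate_notMem hfix (by omega) hx
    fun j hj₀ hjn => hdisj.notMem_of_mem_right (hint j hj₀ (by omega))

/-- One-dimensional model of Theorem 4: if `I₀` lies to the left of `I₁` and
`I₀ → I₁`, `I₁ → I₁`, `I₁ → I₀`, then for every `n ≥ 2` there is `x ∈ I₀` with
`fⁿ(x) = x` and `f^j(x) ∈ I₁` for `1 ≤ j ≤ n-1`; if moreover the interiors are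
disjoint and the orbit passes through the interiors, the least period of `x` is `n`. -/
theorem stmt_19 (f : ℝ → ℝ) (hf : Continuous f)
    (a₀ b₀ a₁ b₁ : ℝ) (h₀ : a₀ ≤ b₀) (h₁ : a₁ ≤ b₁) (hle : b₀ ≤ a₁)
    (hc01 : Covers f (Set.Icc a₀ b₀) (Set.Icc a₁ b₁))
    (hc11 : Covers f (Set.Icc a₁ b₁) (Set.Icc a₁ b₁))
    (hc10 : Covers f (Set.Icc a₁ b₁) (Set.Icc a₀ b₀)) :
    ∀ n : ℕ, 2 ≤ n → ∃ x ∈ Set.Icc a₀ b₀, f^[n] x = x ∧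
      (∀ j : ℕ, 1 ≤ j → j ≤ n - 1 → f^[j] x ∈ Set.Icc a₁ b₁) ∧
      (Disjoint (interior (Set.Icc a₀ b₀)) (interior (Set.Icc a₁ b₁)) →
        x ∈ interior (Set.Icc a₀ b₀) →
        (∀ j : ℕ, 1 ≤ j → j ≤ n - 1 → f^[j] x ∈ interior (Set.Icc a₁ b₁)) →
        Function.minimalPeriod f x = n) :=
  stmt_19_general f hf a₀ b₀ a₁ b₁ hc01 hc11 hc10
end
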